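/- arXiv:1705.10140 — 3 statements merged into one kernel-verified Lean document; each statement's English description precedes it below -/
import Mathlib

section
/- Under Assumption A(ρ) with ρ ≥ 1, for each s ∈ {1,…,T} the function γ_s^{(2)} is of class C^ρ on [0,1], and there exist constants c > 0 and C > 0 such that for all n ≥ 1 and all t ∈ {⌈c·log n⌉, …, nT} with t ≡ s (mod T), one has |E[(X_t^{(n)})²] − γ_s^{(2)}(t/(nT))| ≤ C/n. -/
open MeasureTheory ProbabilityTheory Filter Set
open scoped ProbabilityTheory

noncomputable section

/-- The largest integer strictly smaller than a positive real `ρ`. -/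
def lint (ρ : ℝ) : ℕ := ⌈ρ⌉₊ - 1

/-- A function is of class `C^ρ` on `[0,1]`: it is `lint ρ` times continuously
differentiable there and its `lint ρ`-th derivative is `(ρ - lint ρ)`-Hölder. -/
def CHolder (ρ : ℝ) (f : ℝ → ℝ) : Prop :=
  ContDiffOn ℝ (lint ρ) f (Set.Icc 0 1) ∧
  ∃ C : ℝ, 0 ≤ C ∧ ∀ u ∈ Set.Icc (0:ℝ) 1, ∀ v ∈ Set.Icc (0:ℝ) 1,
    |iteratedDerivWithin (lint ρ) f (Set.Icc 0 1) u -
      iteratedDerivWithin (lint ρ) f (Set.Icc 0 1) v| ≤ C * |u - v| ^ (ρ - (lint ρ : ℝ))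

/-- `β_{s,i}(v) = ∏_{j=0}^{i} a_{s-j}(v)²`. -/
def beta2 (a : ℤ → ℝ → ℝ) (s : ℤ) (i : ℕ) (v : ℝ) : ℝ :=
  ∏ j ∈ Finset.range (i + 1), (a (s - j) v) ^ 2

/-- `γ_s^{(2)}(v) = σ² (1 + Σ_{i=0}^{T-2} β_{s,i}(v)) / (1 - β_{s,T-1}(v))`. -/
def gamma2 (a : ℤ → ℝ → ℝ) (T : ℕ) (σ : ℝ) (s : ℤ) (v : ℝ) : ℝ :=
  σ ^ 2 * (1 + ∑ i ∈ Finset.range (T - 1), beta2 a s i v) / (1 - beta2 a s (T - 1) v)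

/-!
Let `e_t = E[X_t²] - γ_t(t/(nT))`. Since `X_{t-1}` is a function of `X₀, ξ_1, …, ξ_{t-1}`, it is
independent of `ξ_t`, so `E[X_t²] = a_t(t/(nT))² E[X_{t-1}²] + σ²`; by periodicity `γ` satisfies
the same recursion exactly, `γ_t(v) = a_t(v)² γ_{t-1}(v) + σ²`. Subtracting,
`|e_t| ≤ α² (|e_{t-1}| + L/(nT))`, where `L` is a Lipschitz constant of the `γ_s`: these are
rational functions of the `a_t` with denominator `1 - β_{s,T-1} ≥ 1 - α^{2T}`, hence `C^ρ` with
`ρ ≥ 1`. Thus `|e_t| ≤ α^{2t} |e_0| + O(1/n)`, and `α^{2t} ≤ 1/n` once `t ≥ c log n`.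
-/

local notation "I01" => Set.Icc (0:ℝ) 1

/-- The class `C^{m+η}` on `[0,1]`, unfolded one derivative at a time so that closure properties
go by induction on `m`; `CHolder ρ` is the case `m = lint ρ`, `η = ρ - lint ρ`. -/
def CkHolder : ℕ → ℝ → (ℝ → ℝ) → Prop
  | 0, η, f => ContinuousOn f I01 ∧
      ∃ C : ℝ, 0 ≤ C ∧ ∀ u ∈ I01, ∀ v ∈ I01, |f u - f v| ≤ C * |u - v| ^ η
  | m + 1, η, f => DifferentiableOn ℝ f I01 ∧ CkHolder m η (derivWithin f I01)

namespace CkHolder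

variable {η : ℝ}

lemma congr : ∀ {m : ℕ} {f g : ℝ → ℝ}, EqOn f g I01 → CkHolder m η f → CkHolder m η g
  | 0, f, g, hfg, ⟨hc, C, hC, h⟩ =>
    ⟨hc.congr hfg.symm, C, hC, fun u hu v hv => by rw [← hfg hu, ← hfg hv]; exact h u hu v hv⟩
  | _ + 1, _, _, hfg, ⟨hd, h⟩ =>
    ⟨hd.congr fun _ hx => (hfg hx).symm, congr (fun _ hx => derivWithin_congr hfg (hfg hx)) h⟩

lemma continuousOn : ∀ {m : ℕ} {f : ℝ → ℝ}, CkHolder m η f → ContinuousOn f I01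
  | 0, _, h => h.1
  | _ + 1, _, h => h.1.continuousOn

lemma exists_bound {m : ℕ} {f : ℝ → ℝ} (hf : CkHolder m η f) :
    ∃ M, 0 ≤ M ∧ ∀ v ∈ I01, |f v| ≤ M := by
  obtain ⟨M, hM⟩ := isCompact_Icc.exists_bound_of_continuousOn hf.continuousOn
  exact ⟨max M 0, le_max_right _ _, fun v hv => (hM v hv).trans (le_max_left _ _)⟩

lemma exists_lipschitz_of_succ {m : ℕ} {f : ℝ → ℝ} (hf : CkHolder (m + 1) η f) :
    ∃ M, 0 ≤ M ∧ ∀ u ∈ I01, ∀ v ∈ I01, |f u - f v| ≤ M * |u - v| := by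
  obtain ⟨M, hM, hbound⟩ := hf.2.exists_bound
  exact ⟨M, hM, fun u hu v hv =>
    (convex_Icc 0 1).norm_image_sub_le_of_norm_derivWithin_le hf.1 hbound hv hu⟩

lemma of_succ (hη : η ≤ 1) : ∀ {m : ℕ} {f : ℝ → ℝ}, CkHolder (m + 1) η f → CkHolder m η f
  | 0, _, hf => by
    obtain ⟨M, hM, hlip⟩ := hf.exists_lipschitz_of_succ
    exact ⟨hf.continuousOn, M, hM, fun u hu v hv =>
      (hlip u hu v hv).trans (mul_le_mul_of_nonneg_left
        (Real.self_le_rpow_of_le_one (abs_nonneg _) (Real.dist_le_of_mem_Icc_01 hu hv) hη) hM)⟩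
  | _ + 1, _, hf => ⟨hf.1, of_succ hη hf.2⟩

lemma const : ∀ (m : ℕ) (c : ℝ), CkHolder m η fun _ => c
  | 0, c => ⟨continuousOn_const, 0, le_rfl, fun u _ v _ => by simp⟩
  | m + 1, c => ⟨differentiableOn_const c,
      congr (fun x _ => (congrFun (derivWithin_fun_const _ c) x).symm) (const m 0)⟩

lemma add : ∀ {m : ℕ} {f g : ℝ → ℝ}, CkHolder m η f → CkHolder m η g →
    CkHolder m η fun x => f x + g x
  | 0, f, g, ⟨hfc, Cf, hCf, hf⟩, ⟨hgc, Cg, hCg, hg⟩ =>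
    ⟨hfc.add hgc, Cf + Cg, add_nonneg hCf hCg, fun u hu v hv => by
      calc |f u + g u - (f v + g v)| = |(f u - f v) + (g u - g v)| := by ring_nf
        _ ≤ |f u - f v| + |g u - g v| := abs_add_le _ _
        _ ≤ (Cf + Cg) * |u - v| ^ η := by linarith [hf u hu v hv, hg u hu v hv]⟩
  | _ + 1, _, _, hf, hg => ⟨hf.1.add hg.1,
      congr (fun x hx => (derivWithin_add (hf.1 x hx) (hg.1 x hx)).symm) (add hf.2 hg.2)⟩

lemma mul (hη : η ≤ 1) : ∀ {m : ℕ} {f g : ℝ → ℝ}, CkHolder m η f → CkHolder m η g →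
    CkHolder m η fun x => f x * g x
  | 0, f, g, hf, hg => by
    obtain ⟨Mf, hMf, hfb⟩ := hf.exists_bound
    obtain ⟨Mg, hMg, hgb⟩ := hg.exists_bound
    obtain ⟨hfc, Cf, hCf, hfh⟩ := hf
    obtain ⟨hgc, Cg, hCg, hgh⟩ := hg
    refine ⟨hfc.mul hgc, Mf * Cg + Mg * Cf, by positivity, fun u hu v hv => ?_⟩
    calc |f u * g u - f v * g v| = |f u * (g u - g v) + g v * (f u - f v)| := by ring_nf
      _ ≤ |f u| * |g u - g v| + |g v| * |f u - f v| := by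
          rw [← abs_mul, ← abs_mul]; exact abs_add_le _ _
      _ ≤ Mf * (Cg * |u - v| ^ η) + Mg * (Cf * |u - v| ^ η) := by
          gcongr
          exacts [hfb u hu, hgh u hu v hv, hgb v hv, hfh u hu v hv]
      _ = (Mf * Cg + Mg * Cf) * |u - v| ^ η := by ring
  | _ + 1, _, _, hf, hg => ⟨hf.1.mul hg.1,
      congr (fun x hx => (derivWithin_mul (hf.1 x hx) (hg.1 x hx)).symm)
        (add (mul hη hf.2 (hg.of_succ hη)) (mul hη (hf.of_succ hη) hg.2))⟩

lemma sum {m : ℕ} {ι : Type*} (s : Finset ι) {f : ι → ℝ → ℝ}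
    (h : ∀ i ∈ s, CkHolder m η (f i)) : CkHolder m η fun x => ∑ i ∈ s, f i x := by
  classical
  induction s using Finset.induction_on with
  | empty => simpa using const m 0
  | insert i s hi ih =>
    simp_rw [Finset.sum_insert hi]
    exact add (h i (Finset.mem_insert_self i s)) (ih fun j hj => h j (Finset.mem_insert_of_mem hj))

lemma prod (hη : η ≤ 1) {m : ℕ} {ι : Type*} (s : Finset ι) {f : ι → ℝ → ℝ}
    (h : ∀ i ∈ s, CkHolder m η (f i)) : CkHolder m η fun x => ∏ i ∈ s, f i x := by
  classical
  induction s using Finset.induction_on with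
  | empty => simpa using const m 1
  | insert i s hi ih =>
    simp_rw [Finset.prod_insert hi]
    exact mul hη (h i (Finset.mem_insert_self i s))
      (ih fun j hj => h j (Finset.mem_insert_of_mem hj))

lemma inv (hη : η ≤ 1) : ∀ {m : ℕ} {f : ℝ → ℝ}, CkHolder m η f → (∀ v ∈ I01, f v ≠ 0) →
    CkHolder m η fun x => (f x)⁻¹
  | 0, f, hf, hne => by
    have hcont : ContinuousOn (fun x => (f x)⁻¹) I01 := hf.1.inv₀ hne
    obtain ⟨M, hM⟩ := isCompact_Icc.exists_bound_of_continuousOn hcont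
    obtain ⟨C, hC, hfh⟩ := hf.2
    have hM0 : 0 ≤ M := (norm_nonneg _).trans (hM 0 ⟨le_rfl, zero_le_one⟩)
    refine ⟨hcont, M * M * C, by positivity, fun u hu v hv => ?_⟩
    calc |(f u)⁻¹ - (f v)⁻¹| = |(f u)⁻¹| * |(f v)⁻¹| * |f u - f v| := by
          rw [inv_sub_inv (hne u hu) (hne v hv), abs_div, abs_sub_comm, div_eq_mul_inv,
            abs_inv, abs_inv, abs_mul]; ring
      _ ≤ M * M * (C * |u - v| ^ η) := by
          gcongr
          exacts [hM u hu, hM v hv, hfh u hu v hv]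
      _ = M * M * C * |u - v| ^ η := by ring
  | _ + 1, f, hf, hne => by
    have hinv := inv hη (hf.of_succ hη) hne
    refine ⟨fun x hx => (hf.1 x hx).inv (hne x hx), congr (fun x hx => ?_)
      (mul hη (mul hη (const _ (-1)) hf.2) (mul hη hinv hinv))⟩
    rw [derivWithin_fun_inv' (hf.1 x hx) (hne x hx)]
    field_simp

lemma iff_contDiffOn : ∀ {m : ℕ} {f : ℝ → ℝ}, CkHolder m η f ↔
    ContDiffOn ℝ m f I01 ∧ ∃ C : ℝ, 0 ≤ C ∧ ∀ u ∈ I01, ∀ v ∈ I01,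
      |iteratedDerivWithin m f I01 u - iteratedDerivWithin m f I01 v| ≤ C * |u - v| ^ η
  | 0, f => by simp only [CkHolder, contDiffOn_zero, iteratedDerivWithin_zero, Nat.cast_zero]
  | m + 1, f => by
    have hsucc : ContDiffOn ℝ (m + 1 : ℕ) f I01 ↔
        DifferentiableOn ℝ f I01 ∧ ContDiffOn ℝ m (derivWithin f I01) I01 := by
      rw [Nat.cast_succ, contDiffOn_succ_iff_derivWithin (uniqueDiffOn_Icc zero_lt_one)]
      simp
    simp only [CkHolder, iff_contDiffOn, hsucc, iteratedDerivWithin_succ', and_assoc]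

lemma exists_lipschitz {m : ℕ} {f : ℝ → ℝ} (hf : CkHolder m η f) (hm : η = 1 ∨ m ≠ 0) :
    ∃ L, 0 ≤ L ∧ ∀ u ∈ I01, ∀ v ∈ I01, |f u - f v| ≤ L * |u - v| := by
  cases m with
  | zero =>
    obtain ⟨C, hC, h⟩ := hf.2
    obtain rfl : η = 1 := hm.resolve_right (absurd rfl)
    exact ⟨C, hC, by simpa using h⟩
  | succ m => exact hf.exists_lipschitz_of_succ

end CkHolder

lemma sub_lint_le_one (ρ : ℝ) : ρ - lint ρ ≤ 1 := by
  rcases Nat.eq_zero_or_pos ⌈ρ⌉₊ with h | h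
  · rw [lint, h, Nat.zero_sub, Nat.cast_zero, sub_zero]; linarith [Nat.ceil_eq_zero.mp h]
  · rw [lint, Nat.cast_sub h, Nat.cast_one]; linarith [Nat.le_ceil ρ]

lemma cHolder_iff_ckHolder {ρ : ℝ} {f : ℝ → ℝ} :
    CHolder ρ f ↔ CkHolder (lint ρ) (ρ - lint ρ) f :=
  CkHolder.iff_contDiffOn.symm

lemma sub_lint_eq_one_or_lint_ne_zero {ρ : ℝ} (hρ : 1 ≤ ρ) : ρ - lint ρ = 1 ∨ lint ρ ≠ 0 := by
  refine or_iff_not_imp_right.mpr fun h => ?_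
  have hceil : ⌈ρ⌉₊ ≤ 1 := by rw [not_ne_iff, lint] at h; omega
  have : ρ ≤ 1 := by simpa using Nat.ceil_le.mp hceil
  rw [not_ne_iff.mp h, Nat.cast_zero, sub_zero]; linarith

lemma le_pow_mul_add_of_le_mul_add {b : ℕ → ℝ} {q δ : ℝ} (hq0 : 0 ≤ q) (hq1 : q < 1)
    (hδ : 0 ≤ δ) {N : ℕ} (hb : ∀ u < N, b (u + 1) ≤ q * b u + δ) :
    ∀ u ≤ N, b u ≤ q ^ u * b 0 + δ / (1 - q) := by
  have hq : 0 < 1 - q := sub_pos.mpr hq1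
  intro u
  induction u with
  | zero => intro; simpa using div_nonneg hδ hq.le
  | succ u ih =>
    intro hu
    calc b (u + 1) ≤ q * b u + δ := hb u hu
      _ ≤ q * (q ^ u * b 0 + δ / (1 - q)) + δ := by gcongr; exact ih (by omega)
      _ = q ^ (u + 1) * b 0 + δ / (1 - q) := by field_simp; ring

lemma pow_le_inv_of_le {q x : ℝ} (hq0 : 0 < q) (hq1 : q < 1) (hx : 0 < x) {t : ℕ}
    (ht : (Real.log q⁻¹)⁻¹ * Real.log x ≤ t) : q ^ t ≤ x⁻¹ := by
  have hlog : 0 < Real.log q⁻¹ := Real.log_pos ((one_lt_inv₀ hq0).mpr hq1)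
  rw [inv_mul_le_iff₀ hlog] at ht
  rw [← Real.log_le_log_iff (pow_pos hq0 t) (inv_pos.mpr hx), Real.log_pow, Real.log_inv]
  rw [Real.log_inv] at ht hlog
  linarith

section Gamma2

variable {a : ℤ → ℝ → ℝ} {T : ℕ}

lemma beta2_zero (u : ℤ) (v : ℝ) : beta2 a u 0 v = a u v ^ 2 := by
  simp [beta2]

lemma beta2_succ (u : ℤ) (i : ℕ) (v : ℝ) :
    beta2 a u (i + 1) v = a u v ^ 2 * beta2 a (u - 1) i v := by
  rw [beta2, Finset.prod_range_succ', mul_comm, beta2]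
  congr 1
  · simp
  · refine Finset.prod_congr rfl fun j _ => ?_
    push_cast; ring_nf

lemma beta2_add_period (hper : ∀ t v, a (t + T) v = a t v) (u : ℤ) (i : ℕ) (v : ℝ) :
    beta2 a (u + T) i v = beta2 a u i v :=
  Finset.prod_congr rfl fun j _ => by rw [add_sub_right_comm, hper]

lemma gamma2_periodic (hper : ∀ t v, a (t + T) v = a t v) (σ v : ℝ) :
    Function.Periodic (fun u => gamma2 a T σ u v) (T : ℤ) := fun u => by
  simp only [gamma2, beta2_add_period hper]

lemma gamma2_emod (hper : ∀ t v, a (t + T) v = a t v) (σ v : ℝ) (u : ℤ) :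
    gamma2 a T σ (u % T) v = gamma2 a T σ u v := by
  rw [Int.emod_def, mul_comm]
  exact (gamma2_periodic hper σ v).sub_int_mul_eq _

lemma beta2_sub_one (hT : 1 ≤ T) (hper : ∀ t v, a (t + T) v = a t v) (u : ℤ) (v : ℝ) :
    beta2 a (u - 1) (T - 1) v = beta2 a u (T - 1) v := by
  obtain ⟨k, rfl⟩ : ∃ k, T = k + 1 := ⟨T - 1, by omega⟩
  -- the factor `a_{u-T}` gained at one end equals the factor `a_u` lost at the other
  have hwrap : a (u - 1 - k) v = a u v := by
    rw [← hper (u - 1 - k)]; push_cast; ring_nf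
  rw [Nat.add_sub_cancel, beta2, beta2, Finset.prod_range_succ, Finset.prod_range_succ']
  congr 1
  · exact Finset.prod_congr rfl fun j _ => by push_cast; ring_nf
  · simp [hwrap]

lemma gamma2_eq_sq_mul_add (hT : 1 ≤ T) (hper : ∀ t v, a (t + T) v = a t v) (σ : ℝ) {u : ℤ}
    {v : ℝ} (hβ : beta2 a u (T - 1) v ≠ 1) :
    gamma2 a T σ u v = a u v ^ 2 * gamma2 a T σ (u - 1) v + σ ^ 2 := by
  obtain ⟨k, rfl⟩ : ∃ k, T = k + 1 := ⟨T - 1, by omega⟩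
  have hsum : ∑ i ∈ Finset.range k, beta2 a u i v + beta2 a u k v
      = a u v ^ 2 * (1 + ∑ i ∈ Finset.range k, beta2 a (u - 1) i v) := by
    rw [← Finset.sum_range_succ, Finset.sum_range_succ']
    simp only [beta2_succ, beta2_zero, ← Finset.mul_sum]
    ring
  have hden : 1 - beta2 a u k v ≠ 0 := sub_ne_zero.mpr (Ne.symm hβ)
  rw [gamma2, gamma2, beta2_sub_one hT hper]
  simp only [Nat.add_sub_cancel] at hden hsum ⊢
  field_simp
  linear_combination σ ^ 2 * hsum

lemma beta2_lt_one {q v : ℝ} (hq : ∀ t, a t v ^ 2 ≤ q) (hq1 : q < 1) (u : ℤ) (i : ℕ) :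
    beta2 a u i v < 1 := by
  have hq0 : 0 ≤ q := (sq_nonneg _).trans (hq 0)
  calc beta2 a u i v ≤ ∏ _j ∈ Finset.range (i + 1), q :=
        Finset.prod_le_prod (fun _ _ => sq_nonneg _) fun j _ => hq _
    _ = q ^ (i + 1) := by rw [Finset.prod_const, Finset.card_range]
    _ < 1 := pow_lt_one₀ hq0 hq1 (Nat.succ_ne_zero i)

lemma ckHolder_gamma2 {m : ℕ} {η q : ℝ} (hη : η ≤ 1) (ha : ∀ t, CkHolder m η (a t))
    (hq : ∀ t, ∀ v ∈ I01, a t v ^ 2 ≤ q) (hq1 : q < 1) (σ : ℝ) (u : ℤ) :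
    CkHolder m η (gamma2 a T σ u) := by
  have hβ (i : ℕ) : CkHolder m η (beta2 a u i) :=
    CkHolder.prod hη _ fun j _ => ((ha _).mul hη (ha _)).congr fun v _ => (sq _).symm
  have hnum : CkHolder m η fun v => σ ^ 2 * (1 + ∑ i ∈ Finset.range (T - 1), beta2 a u i v) :=
    (CkHolder.const m _).mul hη ((CkHolder.const m 1).add (CkHolder.sum _ fun i _ => hβ i))
  have hden : CkHolder m η fun v => 1 - beta2 a u (T - 1) v :=
    ((CkHolder.const m 1).add ((CkHolder.const m (-1)).mul hη (hβ _))).congr fun v _ => by ring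
  have hden_ne : ∀ v ∈ I01, 1 - beta2 a u (T - 1) v ≠ 0 := fun v hv =>
    sub_ne_zero.mpr (beta2_lt_one (fun t => hq t v hv) hq1 u _).ne'
  exact (hnum.mul hη (hden.inv hη hden_ne)).congr fun v _ => by simp only [gamma2, div_eq_mul_inv]

lemma exists_lipschitz_gamma2 (hT : 1 ≤ T) (hper : ∀ t v, a (t + T) v = a t v) (σ : ℝ)
    (hlip : ∀ u : ℤ, ∃ L, 0 ≤ L ∧ ∀ v ∈ I01, ∀ w ∈ I01,
      |gamma2 a T σ u v - gamma2 a T σ u w| ≤ L * |v - w|) :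
    ∃ L, 0 ≤ L ∧ ∀ u : ℤ, ∀ v ∈ I01, ∀ w ∈ I01,
      |gamma2 a T σ u v - gamma2 a T σ u w| ≤ L * |v - w| := by
  -- only the `T` functions `γ_0, …, γ_{T-1}` are distinct
  choose L hL0 hL using hlip
  refine ⟨∑ r ∈ Finset.range T, L r, Finset.sum_nonneg fun r _ => hL0 r, fun u v hv w hw => ?_⟩
  have hT0 : (0 : ℤ) < T := by exact_mod_cast hT
  obtain ⟨r, hr⟩ := Int.eq_ofNat_of_zero_le (Int.emod_nonneg u hT0.ne')
  have hrT : r < T := by have := Int.emod_lt_of_pos u hT0; omega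
  rw [← gamma2_emod hper σ v, ← gamma2_emod hper σ w, hr]
  refine (hL r v hv w hw).trans (mul_le_mul_of_nonneg_right ?_ (abs_nonneg _))
  exact Finset.single_le_sum (f := fun r : ℕ => L r) (fun r _ => hL0 r) (Finset.mem_range.mpr hrT)

lemma abs_sub_gamma2_le (hT : 1 ≤ T) (hper : ∀ t v, a (t + T) v = a t v) {q L σ : ℝ}
    (hq : ∀ t, ∀ v ∈ I01, a t v ^ 2 ≤ q) (hq1 : q < 1) (hL0 : 0 ≤ L)
    (hL : ∀ u : ℤ, ∀ v ∈ I01, ∀ w ∈ I01, |gamma2 a T σ u v - gamma2 a T σ u w| ≤ L * |v - w|)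
    {N : ℕ} {m : ℕ → ℝ}
    (hm : ∀ t < N, m (t + 1) = a (t + 1 : ℕ) ((t + 1 : ℕ) / N) ^ 2 * m t + σ ^ 2) :
    ∀ t ≤ N, |m t - gamma2 a T σ t (t / N)| ≤
      q ^ t * |m 0 - gamma2 a T σ 0 0| + L / N / (1 - q) := by
  have hq0 : 0 ≤ q := (sq_nonneg _).trans (hq 0 0 ⟨le_rfl, zero_le_one⟩)
  have hmem {t : ℕ} (ht : t ≤ N) : (t / N : ℝ) ∈ I01 :=
    ⟨by positivity, div_le_one_of_le₀ (by exact_mod_cast ht) (Nat.cast_nonneg N)⟩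
  simpa using le_pow_mul_add_of_le_mul_add (b := fun t => |m t - gamma2 a T σ t (t / N)|)
    hq0 hq1 (by positivity) fun t ht => by
    set v : ℝ := (t + 1 : ℕ) / N
    set w : ℝ := t / N
    have hv : v ∈ I01 := hmem ht
    have hw : w ∈ I01 := hmem ht.le
    have hvw : |w - v| = 1 / N := by
      rw [div_sub_div_same, Nat.cast_succ, sub_add_cancel_left, abs_div, abs_neg, abs_one,
        Nat.abs_cast]
    have hγ : gamma2 a T σ (t + 1 : ℕ) v = a (t + 1 : ℕ) v ^ 2 * gamma2 a T σ t v + σ ^ 2 := by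
      simpa using gamma2_eq_sq_mul_add hT hper σ
        (beta2_lt_one (fun s => hq s v hv) hq1 ((t + 1 : ℕ) : ℤ) (T - 1)).ne
    have herr : m (t + 1) - gamma2 a T σ (t + 1 : ℕ) v = a (t + 1 : ℕ) v ^ 2 *
        ((m t - gamma2 a T σ t w) + (gamma2 a T σ t w - gamma2 a T σ t v)) := by
      rw [hm t ht, hγ]; ring
    have hdrift : q * (L * |w - v|) ≤ L / N := by
      rw [hvw, mul_one_div]; exact mul_le_of_le_one_left (by positivity) hq1.le
    calc |m (t + 1) - gamma2 a T σ (t + 1 : ℕ) v|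
        ≤ q * (|m t - gamma2 a T σ t w| + L * |w - v|) := by
          rw [herr, abs_mul, abs_of_nonneg (sq_nonneg _)]
          gcongr
          · exact hq _ v hv
          · exact (abs_add_le _ _).trans (by gcongr; exact hL t w hw v hv)
      _ ≤ q * |m t - gamma2 a T σ t w| + L / N := by linarith

lemma abs_sub_gamma2_le_div (hT : 1 ≤ T) (hper : ∀ t v, a (t + T) v = a t v) {q L σ : ℝ}
    (hq : ∀ t, ∀ v ∈ I01, a t v ^ 2 ≤ q) (hq0 : 0 < q) (hq1 : q < 1) (hL0 : 0 ≤ L)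
    (hL : ∀ u : ℤ, ∀ v ∈ I01, ∀ w ∈ I01, |gamma2 a T σ u v - gamma2 a T σ u w| ≤ L * |v - w|)
    {n : ℕ} (hn : 1 ≤ n) {m : ℕ → ℝ}
    (hm : ∀ t < n * T, m (t + 1) = a (t + 1 : ℕ) ((t + 1 : ℕ) / (n * T)) ^ 2 * m t + σ ^ 2)
    {t : ℕ} (ht0 : ⌈(Real.log q⁻¹)⁻¹ * Real.log n⌉₊ ≤ t) (htN : t ≤ n * T) :
    |m t - gamma2 a T σ t (t / (n * T))| ≤
      (|m 0 - gamma2 a T σ 0 0| + L / (1 - q) + 1) / n := by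
  have herr := abs_sub_gamma2_le hT hper hq hq1 hL0 hL (N := n * T) (m := m)
    (fun t ht => by rw [hm t ht, Nat.cast_mul]) t htN
  rw [Nat.cast_mul] at herr
  have hqt : q ^ t ≤ (n : ℝ)⁻¹ := pow_le_inv_of_le hq0 hq1 (by positivity)
    ((Nat.le_ceil _).trans (by exact_mod_cast ht0))
  have hn0 : (0 : ℝ) < n := by exact_mod_cast hn
  have hnT : (n : ℝ) ≤ n * T := le_mul_of_one_le_right hn0.le (by exact_mod_cast hT)
  have h1q : 0 < 1 - q := sub_pos.mpr hq1
  calc _ ≤ q ^ t * |m 0 - gamma2 a T σ 0 0| + L / (n * T) / (1 - q) := herr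
    _ ≤ (n : ℝ)⁻¹ * |m 0 - gamma2 a T σ 0 0| + L / (1 - q) / n := by
      rw [div_right_comm]; gcongr
    _ ≤ (|m 0 - gamma2 a T σ 0 0| + L / (1 - q) + 1) / n := by
      rw [inv_mul_eq_div, ← add_div]; exact div_le_div_of_nonneg_right (by linarith) hn0.le

end Gamma2

section Probability

variable {Ω : Type*}

/-- The sets `A ∩ B` form a π-system generating `m₁ ⊔ m₂`, and on them
`P(A ∩ B ∩ C) = P(A) P(B) P(C)`. -/
lemma indep_sup_left_of_indep_sup {m₁ m₂ m₃ mΩ : MeasurableSpace Ω} {μ : Measure Ω}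
    [IsZeroOrProbabilityMeasure μ] (h₁ : m₁ ≤ mΩ) (h₂ : m₂ ≤ mΩ) (h₃ : m₃ ≤ mΩ)
    (h₁₂₃ : Indep m₁ (m₂ ⊔ m₃) μ) (h₂₃ : Indep m₂ m₃ μ) : Indep (m₁ ⊔ m₂) m₃ μ := by
  set p := Set.image2 (· ∩ ·) {s | MeasurableSet[m₁] s} {s | MeasurableSet[m₂] s}
  have hp : IsPiSystem p := by
    rintro _ ⟨A, hA, B, hB, rfl⟩ _ ⟨A', hA', B', hB', rfl⟩ _
    exact ⟨A ∩ A', hA.inter hA', B ∩ B', hB.inter hB', (Set.inter_inter_inter_comm A B A' B').symm⟩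
  have hgen : m₁ ⊔ m₂ = MeasurableSpace.generateFrom p := by
    refine le_antisymm (sup_le (fun A hA => ?_) fun B hB => ?_)
      (MeasurableSpace.generateFrom_le ?_)
    · exact MeasurableSpace.measurableSet_generateFrom
        ⟨A, hA, _, MeasurableSet.univ, Set.inter_univ A⟩
    · exact MeasurableSpace.measurableSet_generateFrom
        ⟨_, MeasurableSet.univ, B, hB, Set.univ_inter B⟩
    · rintro _ ⟨A, hA, B, hB, rfl⟩
      exact (le_sup_left (b := m₂) A hA).inter (le_sup_right (a := m₁) B hB)
  refine IndepSets.indep (p2 := {s | MeasurableSet[m₃] s}) (sup_le h₁ h₂) h₃ hp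
    (@MeasurableSpace.isPiSystem_measurableSet Ω m₃) hgen
    (@MeasurableSpace.generateFrom_measurableSet Ω m₃).symm ?_
  rw [IndepSets_iff]
  rintro _ C ⟨A, hA, B, hB, rfl⟩ hC
  have hB' : MeasurableSet[m₂ ⊔ m₃] B := le_sup_left (b := m₃) B hB
  have hC' : MeasurableSet[m₂ ⊔ m₃] C := le_sup_right (a := m₂) C hC
  rw [Indep_iff] at h₁₂₃ h₂₃
  rw [Set.inter_assoc, h₁₂₃ A _ hA (hB'.inter hC'), h₂₃ B C hB hC, h₁₂₃ A B hA hB', mul_assoc]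

abbrev historySigma (X₀ : Ω → ℝ) (ξ : ℕ → Ω → ℝ) (t : ℕ) : MeasurableSpace Ω :=
  MeasurableSpace.comap X₀ inferInstance ⊔ ⨆ i ≤ t, MeasurableSpace.comap (ξ i) inferInstance

lemma measurable_historySigma_of_rec {X₀ : Ω → ℝ} {ξ X : ℕ → Ω → ℝ} {c : ℕ → ℝ} {N : ℕ}
    (hinit : ∀ ω, X 0 ω = X₀ ω)
    (hrec : ∀ t, 1 ≤ t → t ≤ N → ∀ ω, X t ω = c t * X (t - 1) ω + ξ t ω) :
    ∀ t ≤ N, Measurable[historySigma X₀ ξ t] (X t) := by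
  intro t
  induction t with
  | zero =>
    intro
    rw [funext hinit]
    exact (comap_measurable X₀).mono le_sup_left le_rfl
  | succ t ih =>
    intro ht
    have hmono : historySigma X₀ ξ t ≤ historySigma X₀ ξ (t + 1) :=
      sup_le_sup_left (biSup_mono fun i hi => Nat.le_succ_of_le hi) _
    have hξt : Measurable[historySigma X₀ ξ (t + 1)] (ξ (t + 1)) :=
      (comap_measurable (ξ (t + 1))).mono
        (le_sup_of_le_right (le_iSup₂ (f := fun i (_ : i ≤ t + 1) =>
          MeasurableSpace.comap (ξ i) inferInstance) (t + 1) le_rfl)) le_rfl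
    rw [funext (hrec (t + 1) (Nat.le_add_left 1 t) ht), Nat.add_sub_cancel]
    exact (((ih (by omega)).mono hmono le_rfl).const_mul _).add hξt

end Probability

section LinearRecursion

variable {Ω : Type*} [MeasurableSpace Ω] {μ : Measure Ω} {X₀ : Ω → ℝ} {ξ : ℕ → Ω → ℝ}

lemma indep_historySigma [IsProbabilityMeasure μ] (hX₀ : Measurable X₀)
    (hξ : ∀ i, Measurable (ξ i)) (hξind : iIndepFun ξ μ)
    (hX₀ξ : Indep (MeasurableSpace.comap X₀ inferInstance)
      (⨆ i, MeasurableSpace.comap (ξ i) inferInstance) μ) (t : ℕ) :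
    Indep (historySigma X₀ ξ t) (MeasurableSpace.comap (ξ (t + 1)) inferInstance) μ := by
  refine indep_sup_left_of_indep_sup hX₀.comap_le (iSup₂_le fun i _ => (hξ i).comap_le)
    (hξ _).comap_le (indep_of_indep_of_le_right hX₀ξ ?_) ?_
  · exact sup_le (iSup₂_le fun i _ => le_iSup (fun i => MeasurableSpace.comap (ξ i) _) i)
      (le_iSup (fun i => MeasurableSpace.comap (ξ i) _) _)
  · refine indep_of_indep_of_le_right
      (indep_biSup_compl (fun i => (hξ i).comap_le) hξind.iIndep {i | i ≤ t}) ?_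
    exact le_iSup₂ (f := fun i (_ : i ∈ {i | i ≤ t}ᶜ) => MeasurableSpace.comap (ξ i) _) (t + 1)
      (by simp)

variable {X : ℕ → Ω → ℝ} {c : ℕ → ℝ} {N : ℕ}

lemma memLp_two_of_rec (hX₀ : MemLp X₀ 2 μ) (hξ : ∀ i, MemLp (ξ i) 2 μ)
    (hinit : ∀ ω, X 0 ω = X₀ ω)
    (hrec : ∀ t, 1 ≤ t → t ≤ N → ∀ ω, X t ω = c t * X (t - 1) ω + ξ t ω) :
    ∀ t ≤ N, MemLp (X t) 2 μ := by
  intro t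
  induction t with
  | zero => intro; rwa [funext hinit]
  | succ t ih =>
    intro ht
    rw [funext (hrec (t + 1) (Nat.le_add_left 1 t) ht), Nat.add_sub_cancel]
    exact ((ih (by omega)).const_mul _).add (hξ _)

lemma integral_sq_mul_add_of_indepFun [IsProbabilityMeasure μ] {Y Z : Ω → ℝ}
    (hY : MemLp Y 2 μ) (hZ : MemLp Z 2 μ) (hYZ : IndepFun Y Z μ) (hZ0 : ∫ ω, Z ω ∂μ = 0)
    (a : ℝ) : ∫ ω, (a * Y ω + Z ω) ^ 2 ∂μ = a ^ 2 * ∫ ω, Y ω ^ 2 ∂μ + ∫ ω, Z ω ^ 2 ∂μ := by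
  have hY2 := hY.integrable_sq
  have hZ2 := hZ.integrable_sq
  have hYZi : Integrable (fun ω => Y ω * Z ω) μ :=
    hYZ.integrable_mul (hY.integrable one_le_two) (hZ.integrable one_le_two)
  have hcross : ∫ ω, Y ω * Z ω ∂μ = 0 := by
    rw [← Pi.mul_def, hYZ.integral_mul_eq_mul_integral hY.1 hZ.1, hZ0, mul_zero]
  calc ∫ ω, (a * Y ω + Z ω) ^ 2 ∂μ
      = ∫ ω, (a ^ 2 * Y ω ^ 2 + 2 * a * (Y ω * Z ω)) + Z ω ^ 2 ∂μ := by congr with ω; ring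
    _ = a ^ 2 * ∫ ω, Y ω ^ 2 ∂μ + ∫ ω, Z ω ^ 2 ∂μ := by
      rw [integral_add (f := fun ω => a ^ 2 * Y ω ^ 2 + 2 * a * (Y ω * Z ω))
          ((hY2.const_mul _).add (hYZi.const_mul _)) hZ2,
        integral_add (hY2.const_mul _) (hYZi.const_mul _), integral_const_mul, integral_const_mul,
        hcross, mul_zero, add_zero]

lemma integral_sq_succ_of_rec [IsProbabilityMeasure μ] {σ : ℝ} (hX₀m : Measurable X₀)
    (hX₀ : MemLp X₀ 2 μ) (hξm : ∀ i, Measurable (ξ i)) (hξ : ∀ i, MemLp (ξ i) 2 μ)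
    (hξind : iIndepFun ξ μ) (hX₀ξ : Indep (MeasurableSpace.comap X₀ inferInstance)
      (⨆ i, MeasurableSpace.comap (ξ i) inferInstance) μ)
    (hξmean : ∀ i, ∫ ω, ξ i ω ∂μ = 0) (hξvar : ∀ i, ∫ ω, ξ i ω ^ 2 ∂μ = σ ^ 2)
    (hinit : ∀ ω, X 0 ω = X₀ ω)
    (hrec : ∀ t, 1 ≤ t → t ≤ N → ∀ ω, X t ω = c t * X (t - 1) ω + ξ t ω) :
    ∀ t < N, ∫ ω, X (t + 1) ω ^ 2 ∂μ = c (t + 1) ^ 2 * ∫ ω, X t ω ^ 2 ∂μ + σ ^ 2 := by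
  intro t ht
  have hXt := measurable_historySigma_of_rec hinit hrec t ht.le
  have hind : IndepFun (X t) (ξ (t + 1)) μ := (IndepFun_iff_Indep _ _ _).mpr
    (indep_of_indep_of_le_left (indep_historySigma hX₀m hξm hξind hX₀ξ t) hXt.comap_le)
  rw [← hξvar (t + 1), ← integral_sq_mul_add_of_indepFun
    (memLp_two_of_rec hX₀ hξ hinit hrec t ht.le) (hξ _) hind (hξmean _)]
  congr with ω
  rw [hrec (t + 1) (Nat.le_add_left 1 t) ht ω, Nat.add_sub_cancel]

end LinearRecursion

theorem statement1_general
    {Ω : Type*} [MeasureSpace Ω] (hprob : IsProbabilityMeasure (ℙ : Measure Ω))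
    (T : ℕ) (hT : 1 ≤ T) (ρ : ℝ) (hρ : 1 ≤ ρ)
    -- Assumption A(ρ)
    (a : ℤ → ℝ → ℝ) (α : ℝ) (hα1 : α < 1)
    (hper : ∀ (t : ℤ) (v : ℝ), a (t + T) v = a t v)
    (hbdd : ∀ (t : ℤ), ∀ v ∈ Set.Icc (0:ℝ) 1, |a t v| ≤ α)
    (hreg : ∀ t : ℤ, CHolder ρ (a t))
    -- the i.i.d. innovations, with mean 0 and variance σ² ∈ (0,∞)
    (ξ : ℕ → Ω → ℝ) (hξmeas : ∀ t, Measurable (ξ t))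
    (hξindep : iIndepFun ξ ℙ)
    (hξid : ∀ t, IdentDistrib (ξ t) (ξ 0) ℙ ℙ)
    (hξmean : ∫ ω, ξ 0 ω ∂ℙ = 0)
    (σ : ℝ)
    (hξvar : ∫ ω, (ξ 0 ω) ^ 2 ∂ℙ = σ ^ 2)
    (hξsq : Integrable (fun ω => (ξ 0 ω) ^ 2) ℙ)
    -- the initial value: square integrable and independent of the innovations
    (X0 : Ω → ℝ) (hX0meas : Measurable X0)
    (hX0sq : Integrable (fun ω => (X0 ω) ^ 2) ℙ)
    (hindX0 : Indep (MeasurableSpace.comap X0 inferInstance)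
      (⨆ t, MeasurableSpace.comap (ξ t) inferInstance) ℙ)
    -- the process
    (X : ℕ → ℕ → Ω → ℝ)
    (hXinit : ∀ n ω, X n 0 ω = X0 ω)
    (hXrec : ∀ n t, 1 ≤ t → t ≤ n * T →
      ∀ ω, X n t ω = a (t : ℤ) ((t : ℝ) / ((n : ℝ) * T)) * X n (t - 1) ω + ξ t ω)
 :
    ∀ s : ℕ, 1 ≤ s → s ≤ T →
      CHolder ρ (gamma2 a T σ (s : ℤ)) ∧
      ∃ c C : ℝ, 0 < c ∧ 0 < C ∧
        ∀ n : ℕ, 1 ≤ n → ∀ t : ℕ, ⌈c * Real.log n⌉₊ ≤ t → t ≤ n * T → t % T = s % T →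
          |(∫ ω, (X n t ω) ^ 2 ∂ℙ) - gamma2 a T σ (s : ℤ) ((t : ℝ) / ((n : ℝ) * T))|
            ≤ C / n := by
  intro s _ _
  set q := max α (1 / 2) ^ 2
  have hq : ∀ t, ∀ v ∈ I01, a t v ^ 2 ≤ q := fun t v hv => (sq_abs _).symm.le.trans
    (pow_le_pow_left₀ (abs_nonneg _) ((hbdd t v hv).trans (le_max_left _ _)) 2)
  have hq1 : q < 1 := pow_lt_one₀ (by positivity) (max_lt hα1 (by norm_num)) two_ne_zero
  have hγ (u : ℤ) : CkHolder (lint ρ) (ρ - lint ρ) (gamma2 a T σ u) :=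
    ckHolder_gamma2 (sub_lint_le_one ρ) (fun t => cHolder_iff_ckHolder.mp (hreg t)) hq hq1 σ u
  obtain ⟨L, hL0, hL⟩ := exists_lipschitz_gamma2 hT hper σ fun u =>
    (hγ u).exists_lipschitz (sub_lint_eq_one_or_lint_ne_zero hρ)
  have hmom (n : ℕ) := integral_sq_succ_of_rec (c := fun t => a t (t / (n * T))) hX0meas
    ((memLp_two_iff_integrable_sq hX0meas.aestronglyMeasurable).mpr hX0sq) hξmeas
    (fun t => (hξid t).symm.memLp_snd
      ((memLp_two_iff_integrable_sq (hξmeas 0).aestronglyMeasurable).mpr hξsq))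
    hξindep hindX0 (fun t => (hξid t).integral_eq.trans hξmean)
    (fun t => ((hξid t).comp (measurable_id.pow_const 2)).integral_eq.trans hξvar)
    (hXinit n) (hXrec n)
  refine ⟨cHolder_iff_ckHolder.mpr (hγ s), (Real.log q⁻¹)⁻¹,
    |(∫ ω, X0 ω ^ 2) - gamma2 a T σ 0 0| + L / (1 - q) + 1,
    inv_pos.mpr (Real.log_pos ((one_lt_inv₀ (by positivity)).mpr hq1)),
    by have := sub_pos.mpr hq1; positivity, fun n hn t ht0 htN hts => ?_⟩
  have hts' : (t : ℤ) % T = (s : ℤ) % T := by exact_mod_cast hts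
  rw [← gamma2_emod hper σ _ (s : ℤ), ← hts', gamma2_emod hper]
  simpa only [hXinit n] using abs_sub_gamma2_le_div hT hper hq (by positivity) hq1 hL0 hL hn
    (m := fun t => ∫ ω, X n t ω ^ 2) (hmom n) ht0 htN

/-- Under Assumption A(ρ) with ρ ≥ 1, for each `s ∈ {1,…,T}` the
function `γ_s^{(2)}` is of class `C^ρ` on `[0,1]`, and there exist constants `c > 0`
and `C > 0` such that for all `n ≥ 1` and all `t ∈ {⌈c·log n⌉, …, nT}` with
`t ≡ s (mod T)`, one has `|E[(X_t^{(n)})²] − γ_s^{(2)}(t/(nT))| ≤ C/n`. -/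
theorem statement1
    {Ω : Type*} [MeasureSpace Ω] (hprob : IsProbabilityMeasure (ℙ : Measure Ω))
    (T : ℕ) (hT : 1 ≤ T) (ρ : ℝ) (hρ : 1 ≤ ρ)
    -- Assumption A(ρ)
    (a : ℤ → ℝ → ℝ) (α : ℝ) (hα1 : α < 1)
    (hper : ∀ (t : ℤ) (v : ℝ), a (t + T) v = a t v)
    (hbdd : ∀ (t : ℤ), ∀ v ∈ Set.Icc (0:ℝ) 1, |a t v| ≤ α)
    (hreg : ∀ t : ℤ, CHolder ρ (a t))
    -- the i.i.d. innovations, with mean 0 and variance σ² ∈ (0,∞)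
    (ξ : ℕ → Ω → ℝ) (hξmeas : ∀ t, Measurable (ξ t))
    (hξindep : iIndepFun ξ ℙ)
    (hξid : ∀ t, IdentDistrib (ξ t) (ξ 0) ℙ ℙ)
    (hξmean : ∫ ω, ξ 0 ω ∂ℙ = 0)
    (σ : ℝ) (hσ : 0 < σ)
    (hξvar : ∫ ω, (ξ 0 ω) ^ 2 ∂ℙ = σ ^ 2)
    (hξsq : Integrable (fun ω => (ξ 0 ω) ^ 2) ℙ)
    -- the initial value: square integrable and independent of the innovations
    (X0 : Ω → ℝ) (hX0meas : Measurable X0)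
    (hX0sq : Integrable (fun ω => (X0 ω) ^ 2) ℙ)
    (hindX0 : Indep (MeasurableSpace.comap X0 inferInstance)
      (⨆ t, MeasurableSpace.comap (ξ t) inferInstance) ℙ)
    -- the process
    (X : ℕ → ℕ → Ω → ℝ)
    (hXinit : ∀ n ω, X n 0 ω = X0 ω)
    (hXrec : ∀ n t, 1 ≤ t → t ≤ n * T →
      ∀ ω, X n t ω = a (t : ℤ) ((t : ℝ) / ((n : ℝ) * T)) * X n (t - 1) ω + ξ t ω)
 :
    ∀ s : ℕ, 1 ≤ s → s ≤ T →
      CHolder ρ (gamma2 a T σ (s : ℤ)) ∧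
      ∃ c C : ℝ, 0 < c ∧ 0 < C ∧
        ∀ n : ℕ, 1 ≤ n → ∀ t : ℕ, ⌈c * Real.log n⌉₊ ≤ t → t ≤ n * T → t % T = s % T →
          |(∫ ω, (X n t ω) ^ 2 ∂ℙ) - gamma2 a T σ (s : ℤ) ((t : ℝ) / ((n : ℝ) * T))|
            ≤ C / n :=
  statement1_general hprob T hT ρ hρ a α hα1 hper hbdd hreg ξ hξmeas hξindep hξid hξmean σ hξvar
    hξsq X0 hX0meas hX0sq hindX0 X hXinit hXrec
end
end

section
/- Under Assumption A(ρ), there exist constants C > 0 and c > 0 such that for all n ≥ 1 and all integers t with T < t ≤ nT and t ≥ c·log n, one has |E[(X_t^{(n)})²] − E[(X_{t−T}^{(n)})²]| ≤ C · n^{−(ρ∧1)}. -/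
/-!
The second moments `m s = E[X_s²]` obey `m s = a_s² m (s-1) + σ²`, because `X_{s-1}` is
orthogonal to `ξ_s`; as `a_s² ≤ q < 1` they stay below a constant `M`. The coefficients
`a_s` and `a_{s-T}` are the same function sampled at points `1/n` apart, so they differ by
`O(n^{-(ρ∧1)})` (Hölder for `ρ ≤ 1`, Lipschitz for `ρ > 1`). Hence `d s = |m s - m (s-T)|`
satisfies `d s ≤ q d (s-1) + O(n^{-(ρ∧1)})`, so `d t ≤ q^{t-T} M + O(n^{-(ρ∧1)})`, and
`q^t ≤ 1/n` as soon as `t ≥ log n / (-log q)`.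
-/

open MeasureTheory ProbabilityTheory Filter Set
open scoped ProbabilityTheory

noncomputable section

lemma lint_eq_zero_of_le_one {ρ : ℝ} (hρ : ρ ≤ 1) : lint ρ = 0 := by
  have : ⌈ρ⌉₊ ≤ 1 := Nat.ceil_le.mpr (by exact_mod_cast hρ)
  unfold lint
  omega

lemma one_le_lint_of_one_lt {ρ : ℝ} (hρ : 1 < ρ) : 1 ≤ lint ρ := by
  have : 1 < ⌈ρ⌉₊ := Nat.lt_ceil.mpr (by exact_mod_cast hρ)
  unfold lint
  omega

lemma CHolder.exists_abs_sub_le {ρ : ℝ} {f : ℝ → ℝ} (hf : CHolder ρ f) :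
    ∃ K, 0 ≤ K ∧ ∀ u ∈ Icc (0:ℝ) 1, ∀ v ∈ Icc (0:ℝ) 1,
      |f u - f v| ≤ K * |u - v| ^ min ρ 1 := by
  obtain ⟨hcd, C, hC0, hC⟩ := hf
  rcases le_or_gt ρ 1 with hρ | hρ
  · refine ⟨C, hC0, fun u hu v hv => ?_⟩
    simpa [lint_eq_zero_of_le_one hρ, min_eq_left hρ] using hC u hu v hv
  · have hC1 : ContDiffOn ℝ 1 f (Icc 0 1) :=
      hcd.of_le (by exact_mod_cast one_le_lint_of_one_lt hρ)
    obtain ⟨K, hK⟩ := isCompact_Icc.exists_bound_of_continuousOn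
      (hC1.continuousOn_derivWithin (uniqueDiffOn_Icc one_pos) le_rfl)
    refine ⟨max K 0, le_max_right _ _, fun u hu v hv => ?_⟩
    rw [min_eq_right hρ.le, Real.rpow_one]
    simpa [Real.norm_eq_abs] using
      (convex_Icc (0:ℝ) 1).norm_image_sub_le_of_norm_derivWithin_le
        (hC1.differentiableOn one_ne_zero) (fun x hx => (hK x hx).trans (le_max_left _ _)) hv hu

lemma Function.Periodic.exists_forall_of_monotone {β : Type*} {f : ℕ → β} {T : ℕ}
    (hf : Function.Periodic f T) (hT : 0 < T) {P : β → ℝ → Prop} (hP : ∀ x, Monotone (P x))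
    (h : ∀ s, ∃ K, P (f s) K) : ∃ K, ∀ s, P (f s) K := by
  choose K hK using h
  obtain ⟨K₀, hK₀⟩ := Finite.exists_le fun r : Fin T => K r
  refine ⟨K₀, fun s => ?_⟩
  rw [← hf.map_mod_nat s]
  exact hP _ (hK₀ ⟨s % T, Nat.mod_lt s hT⟩) (hK (s % T))





lemma exists_holder_const_of_periodic {a : ℤ → ℝ → ℝ} {T : ℕ} {ρ : ℝ} (hT : 0 < T)
    (hper : ∀ (t : ℤ) (v : ℝ), a (t + T) v = a t v) (hreg : ∀ t, CHolder ρ (a t)) :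
    ∃ K, 0 ≤ K ∧ ∀ s : ℕ, ∀ u ∈ Icc (0:ℝ) 1, ∀ v ∈ Icc (0:ℝ) 1,
      |a s u - a s v| ≤ K * |u - v| ^ min ρ 1 := by
  have hperN : Function.Periodic (fun s : ℕ => a s) T := fun s => funext fun v => by
    push_cast
    exact hper s v
  obtain ⟨K, hK⟩ := hperN.exists_forall_of_monotone hT
    (P := fun f K => 0 ≤ K ∧ ∀ u ∈ Icc (0:ℝ) 1, ∀ v ∈ Icc (0:ℝ) 1,
      |f u - f v| ≤ K * |u - v| ^ min ρ 1)
    (fun f K K' hKK' hK => ⟨hK.1.trans hKK', fun u hu v hv => (hK.2 u hu v hv).trans (by gcongr)⟩)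
    fun s => (hreg s).exists_abs_sub_le
  exact ⟨K, (hK 0).1, fun s => (hK s).2⟩

lemma div_mem_Icc_of_le {r x : ℝ} (hr : 0 ≤ r) (hrx : r ≤ x) : r / x ∈ Icc (0:ℝ) 1 :=
  ⟨div_nonneg hr (hr.trans hrx), div_le_one_of_le₀ hrx (hr.trans hrx)⟩

lemma abs_sub_le_of_periodic_of_holder {a : ℤ → ℝ → ℝ} {T : ℕ} {K e : ℝ}
    (hper : ∀ (t : ℤ) (v : ℝ), a (t + T) v = a t v)
    (hK : ∀ s : ℕ, ∀ u ∈ Icc (0:ℝ) 1, ∀ v ∈ Icc (0:ℝ) 1, |a s u - a s v| ≤ K * |u - v| ^ e)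
    {n s : ℕ} (hn : 0 < n) (hT : 0 < T) (hs : T + s ≤ n * T) :
    |a (T + s : ℕ) ((T + s : ℕ) / (n * T)) - a s (s / (n * T))| ≤ K * (n : ℝ) ^ (-e) := by
  have hnT : (0:ℝ) < n * T := by positivity
  have hmem : ∀ r ≤ n * T, (r : ℝ) / (n * T) ∈ Icc (0:ℝ) 1 := fun r hr =>
    div_mem_Icc_of_le r.cast_nonneg (by exact_mod_cast hr)
  have hdist : |((T + s : ℕ) : ℝ) / (n * T) - s / (n * T)| = (n : ℝ)⁻¹ := by
    rw [← sub_div, Nat.cast_add, add_sub_cancel_right, abs_of_nonneg (by positivity)]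
    field_simp
  have hshift : a ((T + s : ℕ) : ℤ) = a s := funext fun v => by
    rw [Nat.cast_add, add_comm, hper]
  calc _ ≤ K * |((T + s : ℕ) : ℝ) / (n * T) - s / (n * T)| ^ e := by
        rw [hshift]
        exact hK s _ (hmem _ hs) _ (hmem _ (by omega))
    _ = K * (n : ℝ) ^ (-e) := by
        rw [hdist, Real.inv_rpow (Nat.cast_nonneg n), Real.rpow_neg (Nat.cast_nonneg n)]

lemma pow_le_rpow_neg_of_inv_neg_log_mul_le {q x e : ℝ} {t : ℕ} (hq0 : 0 < q) (hq1 : q < 1)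
    (hx : 1 ≤ x) (he : e ≤ 1) (ht : (-Real.log q)⁻¹ * Real.log x ≤ t) : q ^ t ≤ x ^ (-e) := by
  have hlog : 0 < -Real.log q := neg_pos.mpr (Real.log_neg hq0 hq1)
  rw [inv_mul_le_iff₀ hlog] at ht
  have hqt : q ^ t ≤ x⁻¹ := by
    rw [Real.pow_le_iff_le_log hq0 (by positivity), Real.log_inv]
    linarith
  rw [← Real.rpow_neg_one] at hqt
  exact hqt.trans (Real.rpow_le_rpow_of_exponent_le hx (by linarith))

section Recursion

variable {m A : ℕ → ℝ} {N : ℕ} {q v M : ℝ}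

lemma le_of_sq_mul_add_rec (hrec : ∀ s < N, m (s + 1) = A (s + 1) ^ 2 * m s + v)
    (hA : ∀ s < N, A (s + 1) ^ 2 ≤ q) (hM : 0 ≤ M) (hm0 : m 0 ≤ M) (hv : v ≤ (1 - q) * M) :
    ∀ s ≤ N, m s ≤ M := by
  intro s
  induction s with
  | zero => exact fun _ => hm0
  | succ s ih =>
    intro hs
    rw [hrec s hs]
    nlinarith [ih (by omega), hA s hs, sq_nonneg (A (s + 1))]

lemma le_pow_mul_add_div_of_le_mul_add {d : ℕ → ℝ} {b : ℝ} (hq0 : 0 ≤ q) (hq1 : q < 1)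
    (hb : 0 ≤ b) (hd : ∀ k < N, d (k + 1) ≤ q * d k + b) :
    ∀ k ≤ N, d k ≤ q ^ k * d 0 + b / (1 - q) := by
  have h1q : 0 < 1 - q := by linarith
  intro k
  induction k with
  | zero => exact fun _ => by simpa using div_nonneg hb h1q.le
  | succ k ih =>
    intro hk
    calc d (k + 1) ≤ q * (q ^ k * d 0 + b / (1 - q)) + b :=
          (hd k hk).trans (by gcongr; exact ih (by omega))
      _ = q ^ (k + 1) * d 0 + b / (1 - q) := by field_simp; ring

lemma abs_sq_mul_add_sub_sq_mul_add_le {a b x y δ : ℝ} (ha : a ^ 2 ≤ q) (hb : b ^ 2 ≤ q)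
    (hq : q ≤ 1) (hab : |a - b| ≤ δ) (hy : |y| ≤ M) :
    |(a ^ 2 * x + v) - (b ^ 2 * y + v)| ≤ q * |x - y| + 2 * δ * M := by
  have hsq : |a ^ 2 - b ^ 2| ≤ 2 * δ := by
    have hsum : |a + b| ≤ 2 := (abs_add_le a b).trans <| by
      linarith [(sq_le_one_iff_abs_le_one a).mp (ha.trans hq),
        (sq_le_one_iff_abs_le_one b).mp (hb.trans hq)]
    rw [sq_sub_sq, abs_mul]
    nlinarith [abs_nonneg (a + b), abs_nonneg (a - b)]
  calc |(a ^ 2 * x + v) - (b ^ 2 * y + v)| = |a ^ 2 * (x - y) + (a ^ 2 - b ^ 2) * y| := by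
        ring_nf
    _ ≤ a ^ 2 * |x - y| + |a ^ 2 - b ^ 2| * |y| := by
        rw [← abs_of_nonneg (sq_nonneg a), ← abs_mul, ← abs_mul, abs_of_nonneg (sq_nonneg a)]
        exact abs_add_le _ _
    _ ≤ q * |x - y| + 2 * δ * M := by
        gcongr
        exact (abs_nonneg _).trans hsq

lemma abs_sub_shift_le_of_sq_mul_add_rec {T : ℕ} {δ : ℝ} (hq0 : 0 ≤ q) (hq1 : q < 1)
    (hδ : 0 ≤ δ) (hrec : ∀ s < N, m (s + 1) = A (s + 1) ^ 2 * m s + v)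
    (hA : ∀ s < N, A (s + 1) ^ 2 ≤ q) (hAT : ∀ k, T + k < N → |A (T + k + 1) - A (k + 1)| ≤ δ)
    (hm0 : ∀ s ≤ N, 0 ≤ m s) (hmM : ∀ s ≤ N, m s ≤ M) :
    ∀ k, T + k ≤ N → |m (T + k) - m k| ≤ q ^ k * M + 2 * δ * M / (1 - q) := by
  have habs : ∀ s ≤ N, |m s| ≤ M := fun s hs => by
    rw [abs_of_nonneg (hm0 s hs)]
    exact hmM s hs
  have hstep : ∀ j < N - T, |m (T + (j + 1)) - m (j + 1)| ≤ q * |m (T + j) - m j| + 2 * δ * M := by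
    intro j hj
    rw [← add_assoc, hrec _ (by omega), hrec _ (by omega)]
    exact abs_sq_mul_add_sub_sq_mul_add_le (hA _ (by omega)) (hA _ (by omega)) hq1.le
      (hAT j (by omega)) (habs j (by omega))
  intro k hk
  have hstart : |m (T + 0) - m 0| ≤ M := by
    rw [add_zero, abs_le]
    constructor <;>
      linarith [hm0 0 (by omega), hmM 0 (by omega), hm0 T (by omega), hmM T (by omega)]
  calc |m (T + k) - m k| ≤ q ^ k * |m (T + 0) - m 0| + 2 * δ * M / (1 - q) :=
        le_pow_mul_add_div_of_le_mul_add (d := fun j => |m (T + j) - m j|) hq0 hq1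
          (by nlinarith [(abs_nonneg _).trans (habs 0 (by omega))]) hstep k (by omega)
    _ ≤ q ^ k * M + 2 * δ * M / (1 - q) := by gcongr

end Recursion

section SecondMoment

variable {Ω : Type*} [MeasurableSpace Ω] {μ : Measure Ω} {X ξ : ℕ → Ω → ℝ} {A : ℕ → ℝ} {N : ℕ}

lemma memLp_two_of_ar (hX0 : MemLp (X 0) 2 μ) (hξ : ∀ t, MemLp (ξ t) 2 μ)
    (hrec : ∀ s < N, ∀ ω, X (s + 1) ω = A (s + 1) * X s ω + ξ (s + 1) ω) :
    ∀ s ≤ N, MemLp (X s) 2 μ := by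
  intro s
  induction s with
  | zero => exact fun _ => hX0
  | succ s ih =>
    intro hs
    rw [show X (s + 1) = fun ω => A (s + 1) * X s ω + ξ (s + 1) ω from funext (hrec s hs)]
    exact ((ih (by omega)).const_mul _).add (hξ _)

lemma integral_mul_innovation_eq_zero (hX0 : MemLp (X 0) 2 μ)
    (hξ : ∀ t, MemLp (ξ t) 2 μ)
    (hrec : ∀ s < N, ∀ ω, X (s + 1) ω = A (s + 1) * X s ω + ξ (s + 1) ω)
    (hX0ξ : ∀ t, IndepFun (X 0) (ξ t) μ) (hξξ : Pairwise fun s t => IndepFun (ξ s) (ξ t) μ)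
    (hmean : ∀ t, ∫ ω, ξ t ω ∂μ = 0) :
    ∀ s ≤ N, ∀ t, s < t → ∫ ω, X s ω * ξ t ω ∂μ = 0 := by
  intro s
  induction s with
  | zero =>
    intro _ t _
    rw [(hX0ξ t).integral_fun_mul_eq_mul_integral hX0.1 (hξ t).1, hmean, mul_zero]
  | succ s ih =>
    intro hs t hst
    have hsplit : (fun ω => X (s + 1) ω * ξ t ω)
        = fun ω => A (s + 1) * (X s ω * ξ t ω) + ξ (s + 1) ω * ξ t ω := by
      funext ω
      rw [hrec s hs ω]
      ring
    have hXξ : Integrable (fun ω => X s ω * ξ t ω) μ :=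
      (memLp_two_of_ar hX0 hξ hrec s (by omega)).integrable_mul (hξ t)
    have hξξ' : Integrable (fun ω => ξ (s + 1) ω * ξ t ω) μ := (hξ _).integrable_mul (hξ t)
    rw [hsplit, integral_add (hXξ.const_mul _) hξξ', integral_const_mul,
      ih (by omega) t (by omega), ((hξξ hst.ne).integral_fun_mul_eq_mul_integral (hξ _).1 (hξ t).1),
      hmean]
    ring

lemma integral_sq_succ_of_ar (hX0 : MemLp (X 0) 2 μ)
    (hξ : ∀ t, MemLp (ξ t) 2 μ)
    (hrec : ∀ s < N, ∀ ω, X (s + 1) ω = A (s + 1) * X s ω + ξ (s + 1) ω)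
    (hX0ξ : ∀ t, IndepFun (X 0) (ξ t) μ) (hξξ : Pairwise fun s t => IndepFun (ξ s) (ξ t) μ)
    (hmean : ∀ t, ∫ ω, ξ t ω ∂μ = 0) :
    ∀ s < N, ∫ ω, X (s + 1) ω ^ 2 ∂μ
      = A (s + 1) ^ 2 * ∫ ω, X s ω ^ 2 ∂μ + ∫ ω, ξ (s + 1) ω ^ 2 ∂μ := by
  intro s hs
  have hXs := memLp_two_of_ar hX0 hξ hrec s hs.le
  have hexpand : (fun ω => X (s + 1) ω ^ 2) = fun ω =>
      (A (s + 1) ^ 2 * X s ω ^ 2 + 2 * A (s + 1) * (X s ω * ξ (s + 1) ω)) + ξ (s + 1) ω ^ 2 := by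
    funext ω
    rw [hrec s hs ω]
    ring
  have hsq : Integrable (fun ω => A (s + 1) ^ 2 * X s ω ^ 2) μ :=
    hXs.integrable_sq.const_mul _
  have hcross : Integrable (fun ω => 2 * A (s + 1) * (X s ω * ξ (s + 1) ω)) μ :=
    (hXs.integrable_mul (hξ (s + 1))).const_mul _
  have hsum : Integrable (fun ω =>
      A (s + 1) ^ 2 * X s ω ^ 2 + 2 * A (s + 1) * (X s ω * ξ (s + 1) ω)) μ := hsq.add hcross
  rw [hexpand, integral_add hsum (hξ _).integrable_sq, integral_add hsq hcross,
    integral_const_mul, integral_const_mul,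
    integral_mul_innovation_eq_zero hX0 hξ hrec hX0ξ hξξ hmean s hs.le (s + 1) s.lt_succ_self]
  ring

lemma integral_sq_succ_of_ar_iid (hX0 : MemLp (X 0) 2 μ)
    (hξmeas : ∀ t, Measurable (ξ t)) (hξindep : iIndepFun ξ μ)
    (hξid : ∀ t, IdentDistrib (ξ t) (ξ 0) μ μ) (hmean : ∫ ω, ξ 0 ω ∂μ = 0)
    (hξsq : Integrable (fun ω => ξ 0 ω ^ 2) μ)
    (hindX0 : Indep (MeasurableSpace.comap (X 0) inferInstance)
      (⨆ t, MeasurableSpace.comap (ξ t) inferInstance) μ)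
    (hrec : ∀ s < N, ∀ ω, X (s + 1) ω = A (s + 1) * X s ω + ξ (s + 1) ω) :
    ∀ s < N, ∫ ω, X (s + 1) ω ^ 2 ∂μ
      = A (s + 1) ^ 2 * ∫ ω, X s ω ^ 2 ∂μ + ∫ ω, ξ 0 ω ^ 2 ∂μ := by
  have hξ : ∀ t, MemLp (ξ t) 2 μ := fun t => (hξid t).memLp_iff.mpr <|
    (memLp_two_iff_integrable_sq (hξmeas 0).aestronglyMeasurable).mpr hξsq
  have hX0ξ : ∀ t, IndepFun (X 0) (ξ t) μ := fun t => (IndepFun_iff_Indep _ _ _).mpr <|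
    indep_of_indep_of_le_right hindX0 (le_iSup (fun t => MeasurableSpace.comap (ξ t) _) t)
  have hsq : ∀ t, ∫ ω, ξ t ω ^ 2 ∂μ = ∫ ω, ξ 0 ω ^ 2 ∂μ := fun t =>
    ((hξid t).comp (measurable_id.pow_const 2)).integral_eq
  intro s hs
  rw [integral_sq_succ_of_ar hX0 hξ hrec hX0ξ (fun s t hst => hξindep.indepFun hst)
    (fun t => (hξid t).integral_eq.trans hmean) s hs, hsq]

lemma abs_integral_sq_shift_le_of_ar_iid {T : ℕ} {q δ M : ℝ} (hq0 : 0 ≤ q) (hq1 : q < 1)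
    (hδ : 0 ≤ δ) (hX0 : MemLp (X 0) 2 μ) (hξmeas : ∀ t, Measurable (ξ t))
    (hξindep : iIndepFun ξ μ) (hξid : ∀ t, IdentDistrib (ξ t) (ξ 0) μ μ)
    (hmean : ∫ ω, ξ 0 ω ∂μ = 0) (hξsq : Integrable (fun ω => ξ 0 ω ^ 2) μ)
    (hindX0 : Indep (MeasurableSpace.comap (X 0) inferInstance)
      (⨆ t, MeasurableSpace.comap (ξ t) inferInstance) μ)
    (hrec : ∀ s < N, ∀ ω, X (s + 1) ω = A (s + 1) * X s ω + ξ (s + 1) ω)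
    (hA : ∀ s < N, A (s + 1) ^ 2 ≤ q) (hAT : ∀ k, T + k < N → |A (T + k + 1) - A (k + 1)| ≤ δ)
    (hX0M : ∫ ω, X 0 ω ^ 2 ∂μ ≤ M) (hξM : ∫ ω, ξ 0 ω ^ 2 ∂μ ≤ (1 - q) * M) :
    ∀ k, T + k ≤ N →
      |∫ ω, X (T + k) ω ^ 2 ∂μ - ∫ ω, X k ω ^ 2 ∂μ| ≤ q ^ k * M + 2 * δ * M / (1 - q) := by
  have hm := integral_sq_succ_of_ar_iid hX0 hξmeas hξindep hξid hmean hξsq hindX0 hrec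
  have hm0 : ∀ s ≤ N, 0 ≤ ∫ ω, X s ω ^ 2 ∂μ := fun s _ => integral_nonneg fun ω => sq_nonneg _
  have hM : 0 ≤ M := (hm0 0 N.zero_le).trans hX0M
  exact abs_sub_shift_le_of_sq_mul_add_rec hq0 hq1 hδ hm hA hAT hm0
    (le_of_sq_mul_add_rec (m := fun s => ∫ ω, X s ω ^ 2 ∂μ) hm hA hM hX0M hξM)

end SecondMoment

theorem statement13_general
    {Ω : Type*} [MeasureSpace Ω]
    (T : ℕ) (hT : 1 ≤ T) (ρ : ℝ)
    -- Assumption A(ρ)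
    (a : ℤ → ℝ → ℝ) (α : ℝ) (hα1 : α < 1)
    (hper : ∀ (t : ℤ) (v : ℝ), a (t + T) v = a t v)
    (hbdd : ∀ (t : ℤ), ∀ v ∈ Set.Icc (0:ℝ) 1, |a t v| ≤ α)
    (hreg : ∀ t : ℤ, CHolder ρ (a t))
    -- the i.i.d. innovations, with mean 0 and variance σ² ∈ (0,∞)
    (ξ : ℕ → Ω → ℝ) (hξmeas : ∀ t, Measurable (ξ t))
    (hξindep : iIndepFun ξ ℙ)
    (hξid : ∀ t, IdentDistrib (ξ t) (ξ 0) ℙ ℙ)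
    (hξmean : ∫ ω, ξ 0 ω ∂ℙ = 0)
    (σ : ℝ)
    (hξvar : ∫ ω, (ξ 0 ω) ^ 2 ∂ℙ = σ ^ 2)
    (hξsq : Integrable (fun ω => (ξ 0 ω) ^ 2) ℙ)
    -- the initial value: square integrable and independent of the innovations
    (X0 : Ω → ℝ) (hX0meas : Measurable X0)
    (hX0sq : Integrable (fun ω => (X0 ω) ^ 2) ℙ)
    (hindX0 : Indep (MeasurableSpace.comap X0 inferInstance)
      (⨆ t, MeasurableSpace.comap (ξ t) inferInstance) ℙ)
    -- the process
    (X : ℕ → ℕ → Ω → ℝ)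
    (hXinit : ∀ n ω, X n 0 ω = X0 ω)
    (hXrec : ∀ n t, 1 ≤ t → t ≤ n * T →
      ∀ ω, X n t ω = a (t : ℤ) ((t : ℝ) / ((n : ℝ) * T)) * X n (t - 1) ω + ξ t ω)
 :
    ∃ C c : ℝ, 0 < C ∧ 0 < c ∧
      ∀ n : ℕ, 1 ≤ n → ∀ t : ℕ, T < t → t ≤ n * T → c * Real.log n ≤ t →
        |(∫ ω, (X n t ω) ^ 2 ∂ℙ) - ∫ ω, (X n (t - T) ω) ^ 2 ∂ℙ|
          ≤ C * (n : ℝ) ^ (-(min ρ 1)) := by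
  have hα0 : 0 ≤ α := (abs_nonneg _).trans (hbdd 0 0 ⟨le_rfl, zero_le_one⟩)
  -- contraction factor of the second moments, kept away from `0` so that `log q < 0`
  set q : ℝ := max (α ^ 2) 2⁻¹
  have hq0 : 0 < q := lt_max_of_lt_right (by norm_num)
  have hq1 : q < 1 := max_lt (by nlinarith) (by norm_num)
  obtain ⟨K, hK0, hK⟩ := exists_holder_const_of_periodic hT hper hreg
  set M : ℝ := max (∫ ω, X0 ω ^ 2 ∂ℙ) (σ ^ 2 / (1 - q))
  have hM : 0 ≤ M := (div_nonneg (sq_nonneg σ) (by linarith)).trans (le_max_right _ _)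
  have hσM : σ ^ 2 ≤ (1 - q) * M := (div_le_iff₀' (by linarith)).mp (le_max_right _ _)
  refine ⟨M / q ^ T + 2 * K * M / (1 - q) + 1, (-Real.log q)⁻¹, by
    have : 0 ≤ 2 * K * M / (1 - q) := div_nonneg (by positivity) (by linarith)
    positivity, inv_pos.mpr (neg_pos.mpr (Real.log_neg hq0 hq1)), ?_⟩
  intro n hn t hTt htn hlog
  set A : ℕ → ℝ := fun s => a s (s / (n * T))
  have hrec : ∀ s < n * T, ∀ ω, X n (s + 1) ω = A (s + 1) * X n s ω + ξ (s + 1) ω :=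
    fun s hs ω => by simpa [A] using hXrec n (s + 1) (by omega) hs ω
  have hA : ∀ s < n * T, A (s + 1) ^ 2 ≤ q := fun s hs => by
    have : |A (s + 1)| ≤ α :=
      hbdd _ _ (div_mem_Icc_of_le (by positivity) (by exact_mod_cast hs))
    exact (sq_le_sq.mpr (this.trans (le_abs_self α))).trans (le_max_left _ _)
  have hAT : ∀ k, T + k < n * T → |A (T + k + 1) - A (k + 1)| ≤ K * (n : ℝ) ^ (-min ρ 1) :=
    fun k hk => abs_sub_le_of_periodic_of_holder hper hK (s := k + 1) hn hT hk
  have hX0 : X n 0 = X0 := funext (hXinit n)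
  have hdiff := abs_integral_sq_shift_le_of_ar_iid hq0.le hq1 (by positivity)
    (hX0 ▸ (memLp_two_iff_integrable_sq hX0meas.aestronglyMeasurable).mpr hX0sq) hξmeas hξindep
    hξid hξmean hξsq (hX0 ▸ hindX0) hrec hA hAT (hX0 ▸ le_max_left _ _) (hξvar ▸ hσM)
    (t - T) (by omega)
  have hqt : q ^ (t - T) ≤ (n : ℝ) ^ (-min ρ 1) / q ^ T := by
    rw [le_div_iff₀ (by positivity), ← pow_add, Nat.sub_add_cancel hTt.le]
    exact pow_le_rpow_neg_of_inv_neg_log_mul_le hq0 hq1 (by exact_mod_cast hn)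
      (min_le_right _ _) hlog
  rw [Nat.add_sub_cancel' hTt.le] at hdiff
  calc _ ≤ q ^ (t - T) * M + 2 * (K * (n : ℝ) ^ (-min ρ 1)) * M / (1 - q) := hdiff
    _ ≤ (n : ℝ) ^ (-min ρ 1) / q ^ T * M + 2 * (K * (n : ℝ) ^ (-min ρ 1)) * M / (1 - q) := by
      gcongr
    _ = (M / q ^ T + 2 * K * M / (1 - q)) * (n : ℝ) ^ (-min ρ 1) := by ring
    _ ≤ _ := mul_le_mul_of_nonneg_right (by linarith) (by positivity)

/-- Under Assumption A(ρ), there exist constants `C, c > 0` such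
that for all `n ≥ 1` and all `T < t ≤ nT` with `t ≥ c log n`, one has
`|E[(X_t^{(n)})²] − E[(X_{t−T}^{(n)})²]| ≤ C n^{−(ρ∧1)}`. -/
theorem statement13
    {Ω : Type*} [MeasureSpace Ω] (hprob : IsProbabilityMeasure (ℙ : Measure Ω))
    (T : ℕ) (hT : 1 ≤ T) (ρ : ℝ) (hρ : 0 < ρ)
    -- Assumption A(ρ)
    (a : ℤ → ℝ → ℝ) (α : ℝ) (hα1 : α < 1)
    (hper : ∀ (t : ℤ) (v : ℝ), a (t + T) v = a t v)
    (hbdd : ∀ (t : ℤ), ∀ v ∈ Set.Icc (0:ℝ) 1, |a t v| ≤ α)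
    (hreg : ∀ t : ℤ, CHolder ρ (a t))
    -- the i.i.d. innovations, with mean 0 and variance σ² ∈ (0,∞)
    (ξ : ℕ → Ω → ℝ) (hξmeas : ∀ t, Measurable (ξ t))
    (hξindep : iIndepFun ξ ℙ)
    (hξid : ∀ t, IdentDistrib (ξ t) (ξ 0) ℙ ℙ)
    (hξmean : ∫ ω, ξ 0 ω ∂ℙ = 0)
    (σ : ℝ) (hσ : 0 < σ)
    (hξvar : ∫ ω, (ξ 0 ω) ^ 2 ∂ℙ = σ ^ 2)
    (hξsq : Integrable (fun ω => (ξ 0 ω) ^ 2) ℙ)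
    -- the initial value: square integrable and independent of the innovations
    (X0 : Ω → ℝ) (hX0meas : Measurable X0)
    (hX0sq : Integrable (fun ω => (X0 ω) ^ 2) ℙ)
    (hindX0 : Indep (MeasurableSpace.comap X0 inferInstance)
      (⨆ t, MeasurableSpace.comap (ξ t) inferInstance) ℙ)
    -- the process
    (X : ℕ → ℕ → Ω → ℝ)
    (hXinit : ∀ n ω, X n 0 ω = X0 ω)
    (hXrec : ∀ n t, 1 ≤ t → t ≤ n * T →
      ∀ ω, X n t ω = a (t : ℤ) ((t : ℝ) / ((n : ℝ) * T)) * X n (t - 1) ω + ξ t ω)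
 :
    ∃ C c : ℝ, 0 < C ∧ 0 < c ∧
      ∀ n : ℕ, 1 ≤ n → ∀ t : ℕ, T < t → t ≤ n * T → c * Real.log n ≤ t →
        |(∫ ω, (X n t ω) ^ 2 ∂ℙ) - ∫ ω, (X n (t - T) ω) ^ 2 ∂ℙ|
          ≤ C * (n : ℝ) ^ (-(min ρ 1)) :=
  statement13_general T hT ρ a α hα1 hper hbdd hreg ξ hξmeas hξindep hξid hξmean σ hξvar hξsq X0
    hX0meas hX0sq hindX0 X hXinit hXrec
end
end

section
/- Under Assumption A(ρ) with X_0 = 0 almost surely and ξ_0 having a symmetric distribution, for M > 0 define the truncated innovations ξ_{t,M} = ξ_t · 1_{{|ξ_t| ≤ M}} and the truncated process X_{0,M}^{(n)} = 0, X_{t,M}^{(n)} = a_t(t/(nT)) X_{t−1,M}^{(n)} + ξ_{t,M} for 1 ≤ t ≤ nT, and set h(M) = E[ξ_0² · 1_{{|ξ_0| > M}}]. Then there exist constants C > 0 and M₀ > 0 such that for every M ≥ M₀, every n ≥ 1 and every 0 ≤ t ≤ nT, one has E[(X_t^{(n)} − X_{t,M}^{(n)})²] ≤ (2/(1−α²))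 · (2α·√(2c)·√(h(M)) + h(M)) with c = sup_{n, 0≤t≤nT} max(E[(X_t^{(n)})²], E[(X_{t,M}^{(n)})²]) < ∞, and consequently E[|(X_t^{(n)})² − (X_{t,M}^{(n)})²|] ≤ C · h(M)^{1/4}. -/
/-!
Both processes and their difference `D = X − X_M` solve the same linear recursion
`Y_t = a_t Y_{t−1} + e_t`, driven respectively by `ξ_t`, by its truncation `ξ_{t,M}` and by the
tail `ξ_t − ξ_{t,M}`. Minkowski's inequality in `L²` and `|a_t| ≤ α < 1` give
`‖Y_t‖₂ ≤ sup ‖e_t‖₂ / (1 − α)`, so `‖X_t‖₂, ‖X_{t,M}‖₂ ≤ σ/(1−α)` and `‖D_t‖₂ ≤ √h(M)/(1−α)`.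
The stated bound on `E[D_t²]` is a weakening of `E[D_t²] ≤ h(M)/(1−α)²`, and the bound on
`E|X_t² − X_{t,M}²|` follows from `X² − X_M² = D (X + X_M)`, Cauchy–Schwarz and
`√h(M) ≤ √σ h(M)^{1/4}` (as `h(M) ≤ σ²`).
-/

open MeasureTheory ProbabilityTheory Filter Set
open scoped ProbabilityTheory

noncomputable section

open scoped ENNReal

def truncate (M x : ℝ) : ℝ := if |x| ≤ M then x else 0

lemma measurable_truncate (M : ℝ) : Measurable (truncate M) :=
  Measurable.ite (measurableSet_le continuous_abs.measurable measurable_const) measurable_id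
    measurable_const

lemma abs_truncate_le (M x : ℝ) : |truncate M x| ≤ |x| := by
  unfold truncate; split_ifs <;> simp

lemma abs_sub_truncate_le (M x : ℝ) : |x - truncate M x| ≤ |x| := by
  unfold truncate; split_ifs <;> simp

lemma sq_sub_truncate (M x : ℝ) : (x - truncate M x) ^ 2 = if M < |x| then x ^ 2 else 0 := by
  by_cases h : |x| ≤ M <;> simp [truncate, h, not_lt.2, not_le.1]

section Lp

variable {Ω : Type*} [MeasurableSpace Ω] {μ : Measure Ω}

lemma lpNorm_two_eq_sqrt_integral_sq {f : Ω → ℝ} (hf : AEStronglyMeasurable f μ) :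
    lpNorm f 2 μ = √(∫ ω, f ω ^ 2 ∂μ) := by
  rw [lpNorm_eq_integral_norm_rpow_toReal two_ne_zero ENNReal.ofNat_ne_top hf]
  norm_num [← Real.sqrt_eq_rpow]

lemma integral_sq_le_of_lpNorm_le {f : Ω → ℝ} {K : ℝ} (hf : AEStronglyMeasurable f μ)
    (hfK : lpNorm f 2 μ ≤ K) : ∫ ω, f ω ^ 2 ∂μ ≤ K ^ 2 := by
  rw [← Real.sq_sqrt (integral_nonneg fun ω => sq_nonneg (f ω)),
    ← lpNorm_two_eq_sqrt_integral_sq hf]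
  exact pow_le_pow_left₀ lpNorm_nonneg hfK 2

lemma integral_norm_mul_le_lpNorm_mul_lpNorm {E : Type*} [NormedAddCommGroup E] {f g : Ω → E}
    {p q : ℝ} (hpq : p.HolderConjugate q) (hf : MemLp f (ENNReal.ofReal p) μ)
    (hg : MemLp g (ENNReal.ofReal q) μ) :
    ∫ ω, ‖f ω‖ * ‖g ω‖ ∂μ ≤ lpNorm f (ENNReal.ofReal p) μ * lpNorm g (ENNReal.ofReal q) μ := by
  rw [lpNorm_eq_integral_norm_rpow_toReal (by simp [hpq.pos]) ENNReal.ofReal_ne_top hf.1,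
    lpNorm_eq_integral_norm_rpow_toReal (by simp [hpq.symm.pos]) ENNReal.ofReal_ne_top hg.1,
    ENNReal.toReal_ofReal hpq.nonneg, ENNReal.toReal_ofReal hpq.symm.nonneg, ← one_div, ← one_div]
  exact integral_mul_norm_le_Lp_mul_Lq hpq hf hg

lemma integral_abs_sq_sub_sq_le {f g : Ω → ℝ} {K L : ℝ} (hf : MemLp f 2 μ) (hg : MemLp g 2 μ)
    (hfK : lpNorm f 2 μ ≤ K) (hgK : lpNorm g 2 μ ≤ K) (hfgL : lpNorm (f - g) 2 μ ≤ L) :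
    ∫ ω, |f ω ^ 2 - g ω ^ 2| ∂μ ≤ 2 * K * L := by
  have h2 : ENNReal.ofReal 2 = 2 := ENNReal.ofReal_ofNat 2
  have hCS := integral_norm_mul_le_lpNorm_mul_lpNorm Real.HolderConjugate.two_two
    (h2 ▸ hf.sub hg) (h2 ▸ hf.add hg)
  rw [h2] at hCS
  calc ∫ ω, |f ω ^ 2 - g ω ^ 2| ∂μ = ∫ ω, ‖(f - g) ω‖ * ‖(f + g) ω‖ ∂μ := by
        congr 1 with ω
        rw [Real.norm_eq_abs, Real.norm_eq_abs, ← abs_mul, Pi.sub_apply, Pi.add_apply]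
        ring_nf
    _ ≤ lpNorm (f - g) 2 μ * (lpNorm f 2 μ + lpNorm g 2 μ) :=
        hCS.trans (mul_le_mul_of_nonneg_left (lpNorm_add_le hf one_le_two) lpNorm_nonneg)
    _ ≤ L * (K + K) := by
        gcongr
        exacts [add_nonneg lpNorm_nonneg lpNorm_nonneg, lpNorm_nonneg.trans hfgL]
    _ = 2 * K * L := by ring

lemma ProbabilityTheory.IdentDistrib.lpNorm_eq {Ω' E : Type*} [MeasurableSpace Ω']
    {ν : Measure Ω'} [NormedAddCommGroup E] [MeasurableSpace E] [BorelSpace E]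
    [SecondCountableTopology E] {f : Ω → E} {g : Ω' → E} {p : ℝ≥0∞} (h : IdentDistrib f g μ ν) :
    lpNorm f p μ = lpNorm g p ν := by
  rw [← toReal_eLpNorm h.aestronglyMeasurable_fst,
    ← toReal_eLpNorm h.symm.aestronglyMeasurable_fst, h.eLpNorm_eq]

lemma ProbabilityTheory.IdentDistrib.memLp_two_and_lpNorm_eq {ξ ξ₀ : Ω → ℝ} {σ : ℝ}
    (hξ : IdentDistrib ξ ξ₀ μ μ) (hσ : 0 ≤ σ)
    (hsq : Integrable (fun ω => ξ₀ ω ^ 2) μ) (hvar : ∫ ω, ξ₀ ω ^ 2 ∂μ = σ ^ 2) :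
    MemLp ξ 2 μ ∧ lpNorm ξ 2 μ = σ := by
  have hξ₀ := hξ.symm.aestronglyMeasurable_fst
  refine ⟨hξ.symm.memLp_snd ((memLp_two_iff_integrable_sq hξ₀).2 hsq), ?_⟩
  rw [hξ.lpNorm_eq, lpNorm_two_eq_sqrt_integral_sq hξ₀, hvar, Real.sqrt_sq hσ]

lemma memLp_comp_of_abs_le {X : Ω → ℝ} {φ : ℝ → ℝ} {p : ℝ≥0∞} (hX : MemLp X p μ)
    (hφm : Measurable φ) (hφ : ∀ x, |φ x| ≤ |x|) : MemLp (fun ω => φ (X ω)) p μ :=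
  hX.of_le (hφm.comp_aemeasurable hX.1.aemeasurable).aestronglyMeasurable
    (Eventually.of_forall fun ω => hφ (X ω))

lemma lpNorm_comp_le_of_abs_le {X : Ω → ℝ} {φ : ℝ → ℝ} {p : ℝ≥0∞} (hX : MemLp X p μ)
    (hφ : ∀ x, |φ x| ≤ |x|) : lpNorm (fun ω => φ (X ω)) p μ ≤ lpNorm X p μ := by
  rw [← lpNorm_abs hX.1]
  exact lpNorm_mono_real hX.abs fun ω => hφ (X ω)

/-- By Minkowski `‖Y_t‖ ≤ α ‖Y_{t-1}‖ + K`, and `K / (1 - α)` is the fixed point of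
`x ↦ α x + K`. -/
theorem memLp_and_lpNorm_le_of_recursion {E : Type*} [NormedAddCommGroup E] [NormedSpace ℝ E]
    {p : ℝ≥0∞} (hp : 1 ≤ p) {m : ℕ} {Y e : ℕ → Ω → E} {b : ℕ → ℝ} {α K : ℝ}
    (hα : α < 1) (hK : 0 ≤ K) (hY0 : Y 0 =ᵐ[μ] 0) (hb : ∀ t, 1 ≤ t → t ≤ m → |b t| ≤ α)
    (he : ∀ t, 1 ≤ t → t ≤ m → MemLp (e t) p μ ∧ lpNorm (e t) p μ ≤ K)
    (hrec : ∀ t, 1 ≤ t → t ≤ m → ∀ ω, Y t ω = b t • Y (t - 1) ω + e t ω) :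
    ∀ t ≤ m, MemLp (Y t) p μ ∧ lpNorm (Y t) p μ ≤ K / (1 - α) := by
  intro t
  induction t with
  | zero =>
    intro _
    have hY0p : MemLp (Y 0) p μ := MemLp.zero.ae_eq hY0.symm
    rw [(lpNorm_eq_zero hY0p (zero_lt_one.trans_le hp).ne').2 hY0]
    exact ⟨hY0p, div_nonneg hK (sub_nonneg.2 hα.le)⟩
  | succ t ih =>
    intro ht
    obtain ⟨hYt, hYtK⟩ := ih (by omega)
    obtain ⟨het, hetK⟩ := he (t + 1) (by omega) ht
    have hY : Y (t + 1) = b (t + 1) • Y t + e (t + 1) := funext (hrec (t + 1) (by omega) ht)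
    have hbt := hb (t + 1) (by omega) ht
    refine ⟨hY ▸ (hYt.const_smul _).add het, ?_⟩
    calc lpNorm (Y (t + 1)) p μ ≤ |b (t + 1)| * lpNorm (Y t) p μ + lpNorm (e (t + 1)) p μ := by
          rw [hY, ← Real.norm_eq_abs, ← coe_nnnorm, ← lpNorm_const_smul]
          exact lpNorm_add_le (hYt.const_smul _) hp
      _ ≤ α * (K / (1 - α)) + K :=
          add_le_add (mul_le_mul hbt hYtK lpNorm_nonneg ((abs_nonneg _).trans hbt)) hetK
      _ = K / (1 - α) := by field_simp [(sub_pos.2 hα).ne']; ring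

lemma lpNorm_sub_truncate_eq {ξ ξ₀ : Ω → ℝ} (hξ : IdentDistrib ξ ξ₀ μ μ) (M : ℝ) :
    lpNorm (fun ω => ξ ω - truncate M (ξ ω)) 2 μ =
      √(∫ ω, (if M < |ξ₀ ω| then ξ₀ ω ^ 2 else 0) ∂μ) := by
  have hφ : Measurable fun x => x - truncate M x := measurable_id.sub (measurable_truncate M)
  have hcomp := hξ.comp hφ
  rw [Function.comp_def, Function.comp_def] at hcomp
  rw [hcomp.lpNorm_eq, lpNorm_two_eq_sqrt_integral_sq hcomp.symm.aestronglyMeasurable_fst]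
  simp_rw [sq_sub_truncate]

end Lp

/-- The right-hand side is the form in which the truncation error is stated, with
`c = (σ / (1 - α)) ^ 2`; it dominates `(s / (1 - α)) ^ 2` because `s ≤ (1 - α) √(2c)`. -/
lemma sq_div_one_sub_le {α σ s : ℝ} (hα0 : 0 ≤ α) (hα1 : α < 1) (hs : 0 ≤ s) (hsσ : s ≤ σ) :
    (s / (1 - α)) ^ 2 ≤ 2 / (1 - α ^ 2) * (2 * α * √(2 * (σ / (1 - α)) ^ 2) * s + s ^ 2) := by
  have h1α : 0 < 1 - α := sub_pos.2 hα1
  set r := √(2 * (σ / (1 - α)) ^ 2)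
  have hsr : s ≤ (1 - α) * r := calc
    s ≤ σ := hsσ
    _ = (1 - α) * √((σ / (1 - α)) ^ 2) := by
      rw [Real.sqrt_sq (div_nonneg (hs.trans hsσ) h1α.le)]; field_simp
    _ ≤ (1 - α) * r := by
      gcongr; exact Real.sqrt_le_sqrt (by linarith [sq_nonneg (σ / (1 - α))])
  have key : s ^ 2 * (1 + α) ≤ 2 * (1 - α) * (2 * α * r * s + s ^ 2) := by
    nlinarith [mul_le_mul_of_nonneg_left hsr (mul_nonneg hα0 hs)]
  rw [div_pow, show 1 - α ^ 2 = (1 - α) * (1 + α) by ring, div_mul_eq_mul_div,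
    div_le_div_iff₀ (by positivity) (by positivity)]
  nlinarith [mul_le_mul_of_nonneg_right key h1α.le]

lemma sqrt_le_sqrt_mul_rpow_quarter {x σ : ℝ} (hx : 0 ≤ x) (hxσ : √x ≤ σ) :
    √x ≤ √σ * x ^ ((1 : ℝ) / 4) := by
  have hσ : 0 ≤ σ := (Real.sqrt_nonneg x).trans hxσ
  have hquarter : x ^ ((1 : ℝ) / 4) ≤ √σ := by
    calc x ^ ((1 : ℝ) / 4) ≤ (σ ^ 2) ^ ((1 : ℝ) / 4) := by
          gcongr; exact (Real.sqrt_le_left hσ).1 hxσ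
      _ = √σ := by
        rw [← Real.rpow_natCast, ← Real.rpow_mul hσ, Real.sqrt_eq_rpow]; norm_num
  calc √x = x ^ ((1 : ℝ) / 4) * x ^ ((1 : ℝ) / 4) := by
        rw [← Real.rpow_add' hx (by norm_num), Real.sqrt_eq_rpow]; norm_num
    _ ≤ √σ * x ^ ((1 : ℝ) / 4) := by gcongr

theorem statement18_general
    {Ω : Type*} [MeasureSpace Ω]
    (T : ℕ)
    -- Assumption A(ρ)
    (a : ℤ → ℝ → ℝ) (α : ℝ) (hα1 : α < 1)
    (hbdd : ∀ (t : ℤ), ∀ v ∈ Set.Icc (0:ℝ) 1, |a t v| ≤ α)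
    -- the i.i.d. innovations, with mean 0 and variance σ² ∈ (0,∞)
    (ξ : ℕ → Ω → ℝ)
    (hξid : ∀ t, IdentDistrib (ξ t) (ξ 0) ℙ ℙ)
    (σ : ℝ) (hσ : 0 < σ)
    (hξvar : ∫ ω, (ξ 0 ω) ^ 2 ∂ℙ = σ ^ 2)
    (hξsq : Integrable (fun ω => (ξ 0 ω) ^ 2) ℙ)
    -- the process, started from X₀ = 0 almost surely
    (X : ℕ → ℕ → Ω → ℝ)
    (hXinit : ∀ n, ∀ᵐ ω ∂ℙ, X n 0 ω = 0)
    (hXrec : ∀ n t, 1 ≤ t → t ≤ n * T →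
      ∀ ω, X n t ω = a (t : ℤ) ((t : ℝ) / ((n : ℝ) * T)) * X n (t - 1) ω + ξ t ω)
    -- the truncated tail second moment h(M) = E[ξ₀² 1_{|ξ₀| > M}]
    (h : ℝ → ℝ)
    (hh : ∀ M : ℝ, h M = ∫ ω, (if M < |ξ 0 ω| then (ξ 0 ω) ^ 2 else 0) ∂ℙ)
    -- the truncated process, driven by ξ_{t,M} = ξ_t 1_{|ξ_t| ≤ M}
    (XM : ℝ → ℕ → ℕ → Ω → ℝ)
    (hXM0 : ∀ M n ω, XM M n 0 ω = 0)
    (hXMrec : ∀ M : ℝ, ∀ n t : ℕ, 1 ≤ t → t ≤ n * T →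
      ∀ ω, XM M n t ω = a (t : ℤ) ((t : ℝ) / ((n : ℝ) * T)) * XM M n (t - 1) ω +
        (if |ξ t ω| ≤ M then ξ t ω else 0)) :
    ∃ c C M₀ : ℝ, 0 ≤ c ∧ 0 < C ∧ 0 < M₀ ∧
      (∀ M : ℝ, ∀ n : ℕ, 1 ≤ n → ∀ t : ℕ, t ≤ n * T →
        (∫ ω, (X n t ω) ^ 2 ∂ℙ) ≤ c ∧ (∫ ω, (XM M n t ω) ^ 2 ∂ℙ) ≤ c) ∧
      ∀ M : ℝ, M₀ ≤ M → ∀ n : ℕ, 1 ≤ n → ∀ t : ℕ, t ≤ n * T →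
        (∫ ω, (X n t ω - XM M n t ω) ^ 2 ∂ℙ)
            ≤ (2 / (1 - α ^ 2)) * (2 * α * Real.sqrt (2 * c) * Real.sqrt (h M) + h M) ∧
        (∫ ω, |(X n t ω) ^ 2 - (XM M n t ω) ^ 2| ∂ℙ) ≤ C * h M ^ ((1 : ℝ) / 4) := by
  have hα0 : 0 ≤ α := (abs_nonneg _).trans (hbdd 0 0 ⟨le_rfl, zero_le_one⟩)
  have h1α : 0 < 1 - α := sub_pos.2 hα1
  have hcoef (n t : ℕ) (_ : 1 ≤ t) (ht : t ≤ n * T) : |a t (t / (n * T))| ≤ α :=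
    hbdd _ _ (unitInterval.div_mem (by positivity) (by positivity) (by exact_mod_cast ht))
  have hξ (t : ℕ) := (hξid t).memLp_two_and_lpNorm_eq hσ.le hξsq hξvar
  have htrunc (M : ℝ) (t : ℕ) : MemLp (fun ω => truncate M (ξ t ω)) 2 ℙ ∧
      lpNorm (fun ω => truncate M (ξ t ω)) 2 ℙ ≤ σ :=
    ⟨memLp_comp_of_abs_le (hξ t).1 (measurable_truncate M) (abs_truncate_le M),
      (hξ t).2 ▸ lpNorm_comp_le_of_abs_le (hξ t).1 (abs_truncate_le M)⟩
  have htail (M : ℝ) (t : ℕ) : MemLp (fun ω => ξ t ω - truncate M (ξ t ω)) 2 ℙ ∧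
      lpNorm (fun ω => ξ t ω - truncate M (ξ t ω)) 2 ℙ = √(h M) :=
    ⟨(hξ t).1.sub (htrunc M t).1, hh M ▸ lpNorm_sub_truncate_eq (hξid t) M⟩
  have hhσ (M : ℝ) : √(h M) ≤ σ :=
    (htail M 0).2 ▸ (hξ 0).2 ▸ lpNorm_comp_le_of_abs_le (hξ 0).1 (abs_sub_truncate_le M)
  have hh0 (M : ℝ) : 0 ≤ h M := hh M ▸ integral_nonneg fun ω => by split_ifs <;> positivity
  have hX (n : ℕ) := memLp_and_lpNorm_le_of_recursion one_le_two hα1 hσ.le (hXinit n)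
    (hcoef n) (fun t _ _ => ⟨(hξ t).1, (hξ t).2.le⟩) (hXrec n)
  have hXM (M : ℝ) (n : ℕ) := memLp_and_lpNorm_le_of_recursion one_le_two hα1 hσ.le
    (ae_of_all _ (hXM0 M n)) (hcoef n) (fun t _ _ => htrunc M t) (hXMrec M n)
  have hD (M : ℝ) (n : ℕ) := memLp_and_lpNorm_le_of_recursion (Y := fun t => X n t - XM M n t)
    one_le_two hα1 (Real.sqrt_nonneg _) (by filter_upwards [hXinit n] with ω hω; simp [hω, hXM0])
    (hcoef n) (fun t _ _ => (htail M t).imp_right le_of_eq) fun t h1 h2 ω => by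
      simp only [Pi.sub_apply, hXrec n t h1 h2, hXMrec M n t h1 h2, truncate, smul_eq_mul]; ring
  refine ⟨(σ / (1 - α)) ^ 2, 2 * σ * √σ / (1 - α) ^ 2, 1, sq_nonneg _, by positivity, one_pos,
    fun M n _ t ht => ⟨integral_sq_le_of_lpNorm_le (hX n t ht).1.1 (hX n t ht).2,
      integral_sq_le_of_lpNorm_le (hXM M n t ht).1.1 (hXM M n t ht).2⟩,
    fun M _ n _ t ht => ⟨?_, ?_⟩⟩
  · calc _ ≤ (√(h M) / (1 - α)) ^ 2 :=
          integral_sq_le_of_lpNorm_le (hD M n t ht).1.1 (hD M n t ht).2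
      _ ≤ _ := by
          simpa only [Real.sq_sqrt (hh0 M)] using
            sq_div_one_sub_le hα0 hα1 (Real.sqrt_nonneg _) (hhσ M)
  · calc _ ≤ 2 * (σ / (1 - α)) * (√(h M) / (1 - α)) :=
          integral_abs_sq_sub_sq_le (hX n t ht).1 (hXM M n t ht).1 (hX n t ht).2
            (hXM M n t ht).2 (hD M n t ht).2
      _ ≤ 2 * (σ / (1 - α)) * (√σ * h M ^ ((1 : ℝ) / 4) / (1 - α)) := by
          gcongr; exact sqrt_le_sqrt_mul_rpow_quarter (hh0 M) (hhσ M)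
      _ = _ := by field_simp

/-- truncation bounds. Under Assumption A(ρ) with `X₀ = 0` a.s. and
symmetric innovations, the truncated process `X_{t,M}` satisfies
`E[(X_t − X_{t,M})²] ≤ (2/(1−α²))(2α√(2c)√(h(M)) + h(M))` for `M` large, where
`c` uniformly bounds the second moments of both processes, and consequently
`E|X_t² − X_{t,M}²| ≤ C h(M)^{1/4}`. -/
theorem statement18
    {Ω : Type*} [MeasureSpace Ω] (hprob : IsProbabilityMeasure (ℙ : Measure Ω))
    (T : ℕ) (hT : 1 ≤ T) (ρ : ℝ) (hρ : 0 < ρ)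
    -- Assumption A(ρ)
    (a : ℤ → ℝ → ℝ) (α : ℝ) (hα1 : α < 1)
    (hper : ∀ (t : ℤ) (v : ℝ), a (t + T) v = a t v)
    (hbdd : ∀ (t : ℤ), ∀ v ∈ Set.Icc (0:ℝ) 1, |a t v| ≤ α)
    (hreg : ∀ t : ℤ, CHolder ρ (a t))
    -- the i.i.d. innovations, with mean 0 and variance σ² ∈ (0,∞)
    (ξ : ℕ → Ω → ℝ) (hξmeas : ∀ t, Measurable (ξ t))
    (hξindep : iIndepFun ξ ℙ)
    (hξid : ∀ t, IdentDistrib (ξ t) (ξ 0) ℙ ℙ)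
    (hξmean : ∫ ω, ξ 0 ω ∂ℙ = 0)
    (σ : ℝ) (hσ : 0 < σ)
    (hξvar : ∫ ω, (ξ 0 ω) ^ 2 ∂ℙ = σ ^ 2)
    (hξsq : Integrable (fun ω => (ξ 0 ω) ^ 2) ℙ)
    -- the process, started from X₀ = 0 almost surely
    (X : ℕ → ℕ → Ω → ℝ)
    (hXinit : ∀ n, ∀ᵐ ω ∂ℙ, X n 0 ω = 0)
    (hXrec : ∀ n t, 1 ≤ t → t ≤ n * T →
      ∀ ω, X n t ω = a (t : ℤ) ((t : ℝ) / ((n : ℝ) * T)) * X n (t - 1) ω + ξ t ω)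
    -- symmetry of the innovations
    (hsym : Measure.map (ξ 0) ℙ = Measure.map (fun ω => -ξ 0 ω) ℙ)
    -- the truncated tail second moment h(M) = E[ξ₀² 1_{|ξ₀| > M}]
    (h : ℝ → ℝ)
    (hh : ∀ M : ℝ, h M = ∫ ω, (if M < |ξ 0 ω| then (ξ 0 ω) ^ 2 else 0) ∂ℙ)
    -- the truncated process, driven by ξ_{t,M} = ξ_t 1_{|ξ_t| ≤ M}
    (XM : ℝ → ℕ → ℕ → Ω → ℝ)
    (hXM0 : ∀ M n ω, XM M n 0 ω = 0)
    (hXMrec : ∀ M : ℝ, ∀ n t : ℕ, 1 ≤ t → t ≤ n * T →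
      ∀ ω, XM M n t ω = a (t : ℤ) ((t : ℝ) / ((n : ℝ) * T)) * XM M n (t - 1) ω +
        (if |ξ t ω| ≤ M then ξ t ω else 0)) :
    ∃ c C M₀ : ℝ, 0 ≤ c ∧ 0 < C ∧ 0 < M₀ ∧
      (∀ M : ℝ, ∀ n : ℕ, 1 ≤ n → ∀ t : ℕ, t ≤ n * T →
        (∫ ω, (X n t ω) ^ 2 ∂ℙ) ≤ c ∧ (∫ ω, (XM M n t ω) ^ 2 ∂ℙ) ≤ c) ∧
      ∀ M : ℝ, M₀ ≤ M → ∀ n : ℕ, 1 ≤ n → ∀ t : ℕ, t ≤ n * T →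
        (∫ ω, (X n t ω - XM M n t ω) ^ 2 ∂ℙ)
            ≤ (2 / (1 - α ^ 2)) * (2 * α * Real.sqrt (2 * c) * Real.sqrt (h M) + h M) ∧
        (∫ ω, |(X n t ω) ^ 2 - (XM M n t ω) ^ 2| ∂ℙ) ≤ C * h M ^ ((1 : ℝ) / 4) :=
  statement18_general T a α hα1 hbdd ξ hξid σ hσ hξvar hξsq X hXinit hXrec h hh XM hXM0 hXMrec
end
end
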